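/- arXiv:2410.23088 — 5 statements merged into one kernel-verified Lean document; each statement's English description precedes it below -/
import Mathlib

section
/- The composition C_0 ∘ X_0, where X_0 is the standard first generator of Thompson's group F viewed as a circle homeomorphism and C_0 is the rotation by 1/2, has order dividing 3, i.e. (C_0 ∘ X_0)^3 = id. -/
instance : Fact ((0 : ℝ) < 1) := ⟨one_pos⟩

/-- The standard generators `X_k` of Thompson's group `F`, as piecewise-linear
maps of `[0,1]` (extended by junk values outside). -/
noncomputable def Xfun (k : ℕ) : ℝ → ℝ := fun x =>
  if x ≤ 1 - 1 / 2 ^ k then x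
  else if x ≤ 1 - 1 / 2 ^ (k + 1) then x / 2 + 1 / 2 - 1 / 2 ^ (k + 1)
  else if x ≤ 1 - 1 / 2 ^ (k + 2) then x - 1 / 2 ^ (k + 2)
  else 2 * x - 1

/-- The circle self-map induced by a map `g : ℝ → ℝ`, using the
representative in `[0,1)` of a point of the circle `[0,1]/~`. -/
noncomputable def circmap (g : ℝ → ℝ) : AddCircle (1 : ℝ) → AddCircle (1 : ℝ) :=
  fun x => ((g ((AddCircle.equivIco 1 0 x : Set.Ico (0 : ℝ) (0 + 1)) : ℝ)) : AddCircle (1 : ℝ))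

/-- Rotation of the circle by `1/2`. -/
noncomputable def C₀ : AddCircle (1 : ℝ) → AddCircle (1 : ℝ) :=
  fun x => x + ((1 / 2 : ℝ) : AddCircle (1 : ℝ))

/-!
The map `C₀ ∘ X₀` sends the arc `[0, 1/2]` affinely onto `[1/2, 3/4]`, that one onto `[3/4, 1]`,
and that one back onto `[0, 1/2]` (as `t ↦ t/2 + 1/2`, `t ↦ t + 1/4`, `t ↦ 2t - 3/2`).
The composite of these three affine maps, in each cyclic order, is the identity.
-/

open Set

lemma Xfun_zero_of_mem_Icc_zero_half {t : ℝ} (ht : t ∈ Icc 0 (1 / 2)) : Xfun 0 t = t / 2 := by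
  unfold Xfun
  split_ifs <;> norm_num at * <;> linarith [ht.1, ht.2]

lemma Xfun_zero_of_mem_Icc_half_threeQuarters {t : ℝ} (ht : t ∈ Icc (1 / 2) (3 / 4)) :
    Xfun 0 t = t - 1 / 4 := by
  unfold Xfun
  split_ifs <;> norm_num at * <;> linarith [ht.1, ht.2]

lemma Xfun_zero_of_threeQuarters_le {t : ℝ} (ht : 3 / 4 ≤ t) : Xfun 0 t = 2 * t - 1 := by
  unfold Xfun
  split_ifs <;> norm_num at * <;> linarith

lemma circmap_coe (g : ℝ → ℝ) {t : ℝ} (ht : t ∈ Ico 0 1) :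
    circmap g t = g t := by
  rw [circmap, AddCircle.equivIco_coe_of_mem (by simpa using ht)]

lemma C₀_comp_circmap_coe (g : ℝ → ℝ) {t : ℝ} (ht : t ∈ Ico 0 1) :
    (C₀ ∘ circmap g) t = ↑(g t + 1 / 2) := by
  rw [Function.comp_apply, C₀, circmap_coe g ht, AddCircle.coe_add]

lemma C₀_comp_X₀_of_mem_Icc_zero_half {t : ℝ} (ht : t ∈ Icc 0 (1 / 2)) :
    (C₀ ∘ circmap (Xfun 0)) t = ↑(t / 2 + 1 / 2) := by
  rw [C₀_comp_circmap_coe _ ⟨ht.1, by linarith [ht.2]⟩, Xfun_zero_of_mem_Icc_zero_half ht]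

lemma C₀_comp_X₀_of_mem_Icc_half_threeQuarters {t : ℝ} (ht : t ∈ Icc (1 / 2) (3 / 4)) :
    (C₀ ∘ circmap (Xfun 0)) t = ↑(t + 1 / 4) := by
  rw [C₀_comp_circmap_coe _ ⟨by linarith [ht.1], by linarith [ht.2]⟩,
    Xfun_zero_of_mem_Icc_half_threeQuarters ht]
  ring_nf

lemma C₀_comp_X₀_of_mem_Icc_threeQuarters_one {t : ℝ} (ht : t ∈ Icc (3 / 4) 1) :
    (C₀ ∘ circmap (Xfun 0)) t = ↑(2 * t - 3 / 2) := by
  rcases ht.2.lt_or_eq with ht_lt | rfl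
  · rw [C₀_comp_circmap_coe _ ⟨by linarith [ht.1], ht_lt⟩, Xfun_zero_of_threeQuarters_le ht.1,
      ← AddCircle.coe_add_period (1 : ℝ) (2 * t - 3 / 2)]
    ring_nf
  · have h_one : ((1 : ℝ) : AddCircle (1 : ℝ)) = ((0 : ℝ) : AddCircle (1 : ℝ)) := by simp
    rw [h_one, C₀_comp_X₀_of_mem_Icc_zero_half ⟨le_rfl, by norm_num⟩]
    norm_num

/-- `(C₀ ∘ X₀)^3 = id` on the circle. -/
theorem C0_X0_order_three :
    ∀ x : AddCircle (1 : ℝ),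
      (C₀ ∘ circmap (Xfun 0)) ((C₀ ∘ circmap (Xfun 0)) ((C₀ ∘ circmap (Xfun 0)) x)) = x := by
  intro x
  obtain ⟨t, ⟨ht₀, ht₁⟩, rfl⟩ : ∃ t ∈ Ico (0 : ℝ) (0 + 1), (t : AddCircle (1 : ℝ)) = x :=
    ⟨_, (AddCircle.equivIco 1 0 x).2, AddCircle.coe_equivIco⟩
  rcases le_total t (1 / 2) with hA | hA
  · rw [C₀_comp_X₀_of_mem_Icc_zero_half ⟨ht₀, hA⟩,
      C₀_comp_X₀_of_mem_Icc_half_threeQuarters ⟨by linarith, by linarith⟩,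
      C₀_comp_X₀_of_mem_Icc_threeQuarters_one ⟨by linarith, by linarith⟩]
    ring_nf
  rcases le_total t (3 / 4) with hB | hB
  · rw [C₀_comp_X₀_of_mem_Icc_half_threeQuarters ⟨hA, hB⟩,
      C₀_comp_X₀_of_mem_Icc_threeQuarters_one ⟨by linarith, by linarith⟩,
      C₀_comp_X₀_of_mem_Icc_zero_half ⟨by linarith, by linarith⟩]
    ring_nf
  · rw [C₀_comp_X₀_of_mem_Icc_threeQuarters_one ⟨hB, by linarith⟩,
      C₀_comp_X₀_of_mem_Icc_zero_half ⟨by linarith, by linarith⟩,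
      C₀_comp_X₀_of_mem_Icc_half_threeQuarters ⟨by linarith, by linarith⟩]
    ring_nf
end

section
/- Let f be a piecewise-linear circle homeomorphism in Thompson's group T. If f maps 0 to the dyadic rational d/2^k with d odd, then every word in the generating set {X_0^{±1}, X_1^{±1}, C_1^{±1}} representing f has length at least k/C − C, for some universal constant C > 0 (independent of f and k). -/
/-- Rotation of the circle by `1/2`. -/
noncomputable def C0c : AddCircle (1 : ℝ) → AddCircle (1 : ℝ) :=
  fun x => x + ((1 / 2 : ℝ) : AddCircle (1 : ℝ))

noncomputable def X0c := circmap (Xfun 0)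
noncomputable def X1c := circmap (Xfun 1)
noncomputable def X0invc := circmap (Function.invFun (Xfun 0))
noncomputable def X1invc := circmap (Function.invFun (Xfun 1))
/-- `C₁ = X₀⁻¹ C₀`. -/
noncomputable def C1c : AddCircle (1 : ℝ) → AddCircle (1 : ℝ) := fun x => X0invc (C0c x)
/-- `C₁⁻¹ = C₀ X₀`. -/
noncomputable def C1invc : AddCircle (1 : ℝ) → AddCircle (1 : ℝ) := fun x => C0c (X0c x)

/-- The generating set `{X₀^{±1}, X₁^{±1}, C₁^{±1}}` of Thompson's group `T`. -/
noncomputable def genT : Set (AddCircle (1 : ℝ) → AddCircle (1 : ℝ)) :=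
  {X0c, X0invc, X1c, X1invc, C1c, C1invc}

/- ### Auxiliary lemmas -/

lemma hp1' (k : ℕ) : (1:ℝ)/2^k = 4*(1/2^(k+2)) := by rw [pow_add]; ring
lemma hp2' (k : ℕ) : (1:ℝ)/2^(k+1) = 2*(1/2^(k+2)) := by rw [pow_add, pow_add]; ring

lemma Xfun_strictMono (k : ℕ) : StrictMono (Xfun k) := by
  have hp : (0:ℝ) < 1/2^(k+2) := by positivity
  intro x y hxy
  unfold Xfun
  rw [hp1' k, hp2' k]
  split_ifs <;> linarith

lemma Xfun_dyadic (k e : ℕ) (b : ℤ) :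
    ∃ c : ℤ, Xfun k ((b:ℝ)/2^(k+2+e)) = (c:ℝ)/2^(k+2+e+1) := by
  unfold Xfun
  split_ifs
  · exact ⟨2*b, by push_cast; field_simp; ring⟩
  · exact ⟨b + 2^(k+2+e) - 2^(e+2), by push_cast; field_simp; ring⟩
  · exact ⟨2*b - 2^(e+1), by push_cast; field_simp; ring⟩
  · exact ⟨4*b - 2^(k+3+e), by push_cast; field_simp; ring⟩

lemma invFun_Xfun_dyadic (k e : ℕ) (b : ℤ) :
    ∃ c : ℤ, Function.invFun (Xfun k) ((b:ℝ)/2^(k+2+e)) = (c:ℝ)/2^(k+2+e+1) := by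
  set r : ℝ := (b:ℝ)/2^(k+2+e) with hrdef
  have key : ∀ (x : ℝ) (c : ℤ), Xfun k x = r → x = (c:ℝ)/2^(k+2+e+1) →
      Function.invFun (Xfun k) r = (c:ℝ)/2^(k+2+e+1) := by
    intro x c hx hxc
    have h1 : Xfun k (Function.invFun (Xfun k) r) = r := Function.invFun_eq ⟨x, hx⟩
    have h2 := (Xfun_strictMono k).injective (h1.trans hx.symm)
    rw [h2, hxc]
  have hp : (0:ℝ) < 1/2^(k+2) := by positivity
  rcases le_or_gt r (1 - 4*(1/2^(k+2))) with h1 | h1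
  · refine ⟨2*b, key r _ ?_ ?_⟩
    · unfold Xfun; rw [hp1' k]; rw [if_pos h1]
    · rw [hrdef]; push_cast; field_simp; ring
  · rcases le_or_gt r (1 - 3*(1/2^(k+2))) with h2 | h2
    · refine ⟨4*b - 2^(k+3+e) + 2^(e+3), key (2*r - 1 + 4*(1/2^(k+2))) _ ?_ ?_⟩
      · unfold Xfun; rw [hp1' k, hp2' k]
        rw [if_neg (by linarith), if_pos (by linarith)]; linarith
      · rw [hrdef]; push_cast; field_simp; ring
    · rcases le_or_gt r (1 - 2*(1/2^(k+2))) with h3 | h3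
      · refine ⟨2*b + 2^(e+1), key (r + 1/2^(k+2)) _ ?_ ?_⟩
        · unfold Xfun; rw [hp1' k, hp2' k]
          rw [if_neg (by linarith), if_neg (by linarith), if_pos (by linarith)]; linarith
        · rw [hrdef]; push_cast; field_simp; ring
      · refine ⟨b + 2^(k+2+e), key ((r + 1)/2) _ ?_ ?_⟩
        · unfold Xfun; rw [hp1' k, hp2' k]
          rw [if_neg (by linarith), if_neg (by linarith), if_neg (by linarith)]; linarith
        · rw [hrdef]; push_cast; field_simp; ring_nf

/-- Dyadic points of the circle with denominator exponent at most `m`. -/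
def Dy (m : ℕ) (x : AddCircle (1:ℝ)) : Prop :=
  ∃ a : ℤ, x = (((a:ℝ) / 2^m : ℝ) : AddCircle (1:ℝ))

lemma coe_lift (x : AddCircle (1:ℝ)) :
    (((AddCircle.equivIco 1 0 x : Set.Ico (0:ℝ) (0+1)) : ℝ) : AddCircle (1:ℝ)) = x :=
  (AddCircle.equivIco 1 0).symm_apply_apply x

lemma lift_dyadic {m : ℕ} {x : AddCircle (1:ℝ)} (hx : Dy m x) :
    ∃ b : ℤ, ((AddCircle.equivIco 1 0 x : Set.Ico (0:ℝ) (0+1)) : ℝ) = (b:ℝ)/2^m := by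
  obtain ⟨a, ha⟩ := hx
  set r : ℝ := ((AddCircle.equivIco 1 0 x : Set.Ico (0:ℝ) (0+1)) : ℝ) with hr
  have h1 : (r : AddCircle (1:ℝ)) = (((a:ℝ)/2^m : ℝ) : AddCircle (1:ℝ)) := by
    rw [hr, coe_lift, ha]
  have h2 : ((r - (a:ℝ)/2^m : ℝ) : AddCircle (1:ℝ)) = 0 := by
    rw [AddCircle.coe_sub, h1, sub_self]
  obtain ⟨n, hn⟩ := (AddCircle.coe_eq_zero_iff 1).mp h2
  have hn' : r = (a:ℝ)/2^m + n := by
    have h3 : (n:ℝ) * 1 = r - (a:ℝ)/2^m := by rw [← zsmul_eq_mul]; exact_mod_cast hn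
    linarith
  refine ⟨a + n * 2^m, ?_⟩
  rw [hn']
  push_cast
  field_simp

/-- If `g` sends level-`m` dyadic reals to level-`(m+1)` dyadic reals, then
`circmap g` sends `Dy m` to `Dy (m+1)`. -/
lemma circmap_dyadic {g : ℝ → ℝ} {m : ℕ}
    (hg : ∀ b : ℤ, ∃ c : ℤ, g ((b:ℝ)/2^m) = (c:ℝ)/2^(m+1)) :
    ∀ x, Dy m x → Dy (m+1) (circmap g x) := by
  intro x hx
  obtain ⟨b, hb⟩ := lift_dyadic hx
  obtain ⟨c, hc⟩ := hg b
  refine ⟨c, ?_⟩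
  show ((g _ : ℝ) : AddCircle (1:ℝ)) = _
  rw [hb, hc]

lemma C0c_dyadic {m : ℕ} (hm : 1 ≤ m) : ∀ x, Dy m x → Dy m (C0c x) := by
  intro x hx
  obtain ⟨a, ha⟩ := hx
  obtain ⟨e, rfl⟩ : ∃ e, m = 1 + e := ⟨m - 1, by omega⟩
  refine ⟨a + 2^e, ?_⟩
  rw [C0c, ha, ← AddCircle.coe_add]
  congr 1
  push_cast
  rw [pow_add]
  field_simp

lemma Dy_succ_of_mem {m : ℕ} (hm : 3 ≤ m) {g} (hg : g ∈ genT) :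
    ∀ x, Dy m x → Dy (m+1) (g x) := by
  obtain ⟨e0, he0⟩ : ∃ e, m = 0 + 2 + e := ⟨m - 2, by omega⟩
  obtain ⟨e1, he1⟩ : ∃ e, m = 1 + 2 + e := ⟨m - 3, by omega⟩
  have hX0 : ∀ x, Dy m x → Dy (m+1) (X0c x) := by
    rw [he0]; exact circmap_dyadic (fun b => Xfun_dyadic 0 e0 b)
  have hX0i : ∀ x, Dy m x → Dy (m+1) (X0invc x) := by
    rw [he0]; exact circmap_dyadic (fun b => invFun_Xfun_dyadic 0 e0 b)
  have hX1 : ∀ x, Dy m x → Dy (m+1) (X1c x) := by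
    rw [he1]; exact circmap_dyadic (fun b => Xfun_dyadic 1 e1 b)
  have hX1i : ∀ x, Dy m x → Dy (m+1) (X1invc x) := by
    rw [he1]; exact circmap_dyadic (fun b => invFun_Xfun_dyadic 1 e1 b)
  rcases hg with h | h | h | h | h | h <;> subst h
  · exact hX0
  · exact hX0i
  · exact hX1
  · exact hX1i
  · intro x hx
    exact hX0i _ (C0c_dyadic (by omega) x hx)
  · intro x hx
    exact C0c_dyadic (by omega) _ (hX0 x hx)

lemma fold_dyadic (w : List (AddCircle (1:ℝ) → AddCircle (1:ℝ)))
    (hw : ∀ g ∈ w, g ∈ genT) : Dy (3 + w.length) ((w.foldr (· ∘ ·) id) 0) := by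
  induction w with
  | nil =>
      refine ⟨0, ?_⟩
      norm_num
  | cons g t ih =>
      have h1 := ih (fun g hg => hw g (List.mem_cons_of_mem _ hg))
      have h2 := Dy_succ_of_mem (m := 3 + t.length) (by omega)
        (hw g List.mem_cons_self) _ h1
      simp only [List.foldr_cons, List.length_cons, Function.comp_apply]
      have he : 3 + (t.length + 1) = 3 + t.length + 1 := by omega
      rw [he]
      exact h2

lemma dy_exponent {d k M : ℕ} (hd : Odd d)
    (h : Dy M ((((d:ℝ)/2^k : ℝ)) : AddCircle (1:ℝ))) : k ≤ M := by
  by_contra hk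
  push_neg at hk
  obtain ⟨e, hke⟩ : ∃ e, k = M + 1 + e := ⟨k - M - 1, by omega⟩
  obtain ⟨a, ha⟩ := h
  have h2 : (((d:ℝ)/2^k - (a:ℝ)/2^M : ℝ) : AddCircle (1:ℝ)) = 0 := by
    rw [AddCircle.coe_sub, ← ha, sub_self]
  obtain ⟨n, hn⟩ := (AddCircle.coe_eq_zero_iff 1).mp h2
  have h3 : (d:ℝ)/2^k = (a:ℝ)/2^M + n := by
    have h3' : (n:ℝ) * 1 = (d:ℝ)/2^k - (a:ℝ)/2^M := by rw [← zsmul_eq_mul]; exact_mod_cast hn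
    linarith
  have h4 : (d:ℝ) = ((a * 2^(e+1) + n * 2^(M+1+e) : ℤ) : ℝ) := by
    have hMpos : (0:ℝ) < 2^M := by positivity
    have hkpos : (0:ℝ) < 2^(M+1+e) := by positivity
    push_cast
    subst hke
    rw [div_eq_iff (ne_of_gt hkpos)] at h3
    rw [h3, pow_add, pow_add, pow_add]
    field_simp
  have h5 : (d:ℤ) = a * 2^(e+1) + n * 2^(M+1+e) := by exact_mod_cast h4
  have h6 : (2:ℤ) ∣ (d:ℤ) := by
    refine ⟨a * 2^e + n * 2^(M+e), ?_⟩
    rw [h5, pow_succ, pow_add, pow_add]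
    ring
  have h7 : Odd (d:ℤ) := by exact_mod_cast hd
  rw [← Int.not_even_iff_odd] at h7
  exact h7 (even_iff_two_dvd.mpr h6)

/-- there is a universal constant `C > 0` such that if `f ∈ T`
maps `0` to `d/2^k` with `d` odd, then every word in `{X₀^{±1}, X₁^{±1}, C₁^{±1}}`
representing `f` has length at least `k/C - C`. -/
theorem T_word_length_lower_bound :
    ∃ C : ℝ, 0 < C ∧
      ∀ (d k : ℕ), Odd d →
        ∀ w : List (AddCircle (1 : ℝ) → AddCircle (1 : ℝ)),
          (∀ g ∈ w, g ∈ genT) →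
          (w.foldr (· ∘ ·) id) 0 = (((d : ℝ) / 2 ^ k : ℝ) : AddCircle (1 : ℝ)) →
          (k : ℝ) / C - C ≤ w.length := by
  refine ⟨3, by norm_num, ?_⟩
  intro d k hd w hw hfold
  have h1 := fold_dyadic w hw
  rw [hfold] at h1
  have h2 : k ≤ 3 + w.length := dy_exponent hd h1
  have h3 : (k:ℝ) ≤ 3 + w.length := by exact_mod_cast h2
  have h4 : (0:ℝ) ≤ (k:ℝ) := Nat.cast_nonneg k
  have h5 : (k:ℝ)/3 ≤ (k:ℝ) := by linarith
  linarith
end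

section
/- Let n ≥ 2. For n-adic rationals x = a/n^k and y = b/n^ℓ in (0,1), there exists f in the Higman–Thompson group F_n with f(x) = y if and only if a ≡ b (mod n−1). -/
/-- `r` is an `n`-adic rational. -/
def IsNAdic (n : ℕ) (r : ℝ) : Prop := ∃ (a : ℤ) (b : ℕ), r = a / n ^ b

/-- Membership in the Higman–Thompson group `F_n`. -/
def IsThompsonFn (n : ℕ) (f : ℝ → ℝ) : Prop :=
  StrictMono f ∧ Continuous f ∧ (∀ x : ℝ, x ≤ 0 ∨ 1 ≤ x → f x = x) ∧
    ∃ B : Finset ℝ, (∀ b ∈ B, IsNAdic n b) ∧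
      ∀ x : ℝ, x ∉ B → ∃ m : ℤ, ∀ᶠ y in nhds x, f y = f x + (n : ℝ) ^ m * (y - x)


namespace FnAux
open Set Filter


/-- congruence mod (n-1) between n-adic rationals -/
def NCong (n : ℕ) (r s : ℝ) : Prop :=
  ∃ (a b : ℤ) (k : ℕ), r = a / (n:ℝ) ^ k ∧ s = b / (n:ℝ) ^ k ∧ ((n:ℤ) - 1) ∣ (a - b)

variable {n : ℕ} (hn : 2 ≤ n)

lemma npos (hn : 2 ≤ n) : (0:ℝ) < (n:ℝ) := by
  have : (0:ℕ) < n := by omega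
  exact_mod_cast this

lemma npowpos (hn : 2 ≤ n) (k : ℕ) : (0:ℝ) < (n:ℝ) ^ k := pow_pos (npos hn) k

lemma pow_cong (j : ℕ) : ((n:ℤ) - 1) ∣ ((n:ℤ) ^ j - 1) := by
  simpa using sub_dvd_pow_sub_pow (n:ℤ) 1 j

lemma mul_pow_cong (a : ℤ) (j : ℕ) : ((n:ℤ) - 1) ∣ (a * (n:ℤ) ^ j - a) := by
  have := (pow_cong (n := n) j).mul_left a
  simpa [mul_sub] using this

/-- well-definedness: two representations of the same n-adic have congruent numerators -/
lemma wd (hn : 2 ≤ n) {a b : ℤ} {k l : ℕ} (h : (a:ℝ) / (n:ℝ) ^ k = (b:ℝ) / (n:ℝ) ^ l) :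
    ((n:ℤ) - 1) ∣ (a - b) := by
  have hk := (npowpos hn k).ne'
  have hl := (npowpos hn l).ne'
  rw [div_eq_div_iff hk hl] at h
  have h' : a * (n:ℤ) ^ l = b * (n:ℤ) ^ k := by exact_mod_cast h
  have d1 := mul_pow_cong (n := n) a l
  have d2 := mul_pow_cong (n := n) b k
  have : a - b = -(a * (n:ℤ)^l - a) + (b * (n:ℤ)^k - b) := by rw [h']; ring
  rw [this]
  exact dvd_add (dvd_neg.mpr d1) d2

lemma ncong_dvd (hn : 2 ≤ n) {r s : ℝ} (h : NCong n r s) {a b : ℤ} {k l : ℕ}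
    (hr : r = a / (n:ℝ) ^ k) (hs : s = b / (n:ℝ) ^ l) : ((n:ℤ) - 1) ∣ (a - b) := by
  obtain ⟨a', b', k', hr', hs', hd⟩ := h
  have d1 : ((n:ℤ)-1) ∣ (a - a') := wd hn (by rw [← hr, ← hr'])
  have d2 : ((n:ℤ)-1) ∣ (b' - b) := wd hn (by rw [← hs, ← hs'])
  have : a - b = (a - a') + (a' - b') + (b' - b) := by ring
  rw [this]
  exact dvd_add (dvd_add d1 hd) d2

lemma ncong_symm {r s : ℝ} (h : NCong n r s) : NCong n s r := by
  obtain ⟨a, b, k, hr, hs, hd⟩ := h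
  exact ⟨b, a, k, hs, hr, (dvd_sub_comm).mp hd⟩

lemma ncong_add (hn : 2 ≤ n) {r s r' s' : ℝ} (h : NCong n r s) (h' : NCong n r' s') :
    NCong n (r + r') (s + s') := by
  obtain ⟨a, b, k, hr, hs, hd⟩ := h
  obtain ⟨a', b', k', hr', hs', hd'⟩ := h'
  have hk := (npowpos hn k).ne'
  have hk' := (npowpos hn k').ne'
  refine ⟨a * (n:ℤ)^k' + a' * (n:ℤ)^k, b * (n:ℤ)^k' + b' * (n:ℤ)^k, k + k', ?_, ?_, ?_⟩
  · rw [hr, hr']; push_cast; rw [pow_add]; field_simp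
  · rw [hs, hs']; push_cast; rw [pow_add]; field_simp
  · have : a * (n:ℤ)^k' + a' * (n:ℤ)^k - (b * (n:ℤ)^k' + b' * (n:ℤ)^k)
        = (a - b) * (n:ℤ)^k' + (a' - b') * (n:ℤ)^k := by ring
    rw [this]
    exact dvd_add (hd.mul_right _) (hd'.mul_right _)

lemma ncong_zpow_mul (hn : 2 ≤ n) {r : ℝ} (hr : IsNAdic n r) (m : ℤ) :
    NCong n ((n:ℝ) ^ m * r) r := by
  obtain ⟨a, k, hak⟩ := hr
  have hne : (n:ℝ) ≠ 0 := (npos hn).ne'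
  rcases le_or_gt 0 m with hm | hm
  · obtain ⟨j, rfl⟩ := Int.eq_ofNat_of_zero_le hm
    refine ⟨a * (n:ℤ)^j, a, k, ?_, hak, mul_pow_cong a j⟩
    rw [hak]; push_cast [zpow_natCast]; field_simp
  · obtain ⟨j, hj⟩ : ∃ j : ℕ, m = -(j:ℤ) := ⟨(-m).toNat, by omega⟩
    subst hj
    refine ⟨a, a * (n:ℤ)^j, k + j, ?_, ?_, ?_⟩
    · rw [hak]; rw [zpow_neg, zpow_natCast, pow_add]
      field_simp
    · rw [hak]; push_cast; rw [pow_add]; field_simp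
    · have := mul_pow_cong (n := n) a j
      have h2 : a - a * (n:ℤ)^j = -(a * (n:ℤ)^j - a) := by ring
      rw [h2]; exact dvd_neg.mpr this


open Set Filter

variable {n : ℕ}

/-- On an interval free of breakpoints, a Thompson-type map is affine with slope a power of n. -/
lemma gap_slope (hn : 2 ≤ n) {f : ℝ → ℝ} (hc : Continuous f) {B : Finset ℝ}
    (hB : ∀ x : ℝ, x ∉ B → ∃ m : ℤ, ∀ᶠ y in nhds x, f y = f x + (n : ℝ) ^ m * (y - x))
    {u v : ℝ} (huv : u < v) (hgap : ∀ p ∈ B, p ∉ Set.Ioo u v) :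
    ∃ m : ℤ, f v - f u = (n:ℝ) ^ m * (v - u) := by
  have hnR : (0:ℝ) < n := by exact_mod_cast (by omega : 0 < n)
  -- local affine structure at each interior point
  have key : ∀ x ∈ Ioo u v, ∃ m : ℤ, ∃ U : Set ℝ, IsOpen U ∧ x ∈ U ∧
      ∀ y ∈ U, f y = f x + (n:ℝ) ^ m * (y - x) := by
    intro x hx
    obtain ⟨m, hm⟩ := hB x (fun hxB => hgap x hxB hx)
    obtain ⟨U, hU1, hU2, hU3⟩ := eventually_nhds_iff.mp hm
    exact ⟨m, U, hU2, hU3, hU1⟩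
  -- derivative at interior points
  have hder : ∀ x ∈ Ioo u v, ∀ m : ℤ, ∀ U : Set ℝ, IsOpen U → x ∈ U →
      (∀ y ∈ U, f y = f x + (n:ℝ) ^ m * (y - x)) → HasDerivAt f ((n:ℝ)^m) x := by
    intro x _ m U hUo hxU hU
    have haff : HasDerivAt (fun y => f x + (n:ℝ)^m * (y - x)) ((n:ℝ)^m) x := by
      simpa using (((hasDerivAt_id x).sub_const x).const_mul ((n:ℝ)^m)).const_add (f x)
    refine haff.congr_of_eventuallyEq ?_
    filter_upwards [hUo.mem_nhds hxU] with y hy using hU y hy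
  -- deriv f is locally constant on the interior
  have hloc : ∀ x ∈ Ioo u v, ∀ᶠ y in nhds x, deriv f y = deriv f x := by
    intro x hx
    obtain ⟨m, U, hUo, hxU, hU⟩ := key x hx
    have hdx : deriv f x = (n:ℝ)^m := (hder x hx m U hUo hxU hU).deriv
    filter_upwards [hUo.mem_nhds hxU] with y hyU
    have hdy : HasDerivAt f ((n:ℝ)^m) y := by
      have haff : HasDerivAt (fun z => f y + (n:ℝ)^m * (z - y)) ((n:ℝ)^m) y := by
        simpa using (((hasDerivAt_id y).sub_const y).const_mul ((n:ℝ)^m)).const_add (f y)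
      refine haff.congr_of_eventuallyEq ?_
      filter_upwards [hUo.mem_nhds hyU] with z hzU
      rw [hU z hzU, hU y hyU]; ring
    rw [hdy.deriv, hdx]
  -- deriv f is constant on the interior
  set w : ℝ := (u + v) / 2 with hw
  have hwmem : w ∈ Ioo u v := ⟨by simp [hw]; linarith, by simp [hw]; linarith⟩
  have hconst : ∀ x ∈ Ioo u v, deriv f x = deriv f w := by
    intro x hx
    have hpc : IsPreconnected (Ioo u v) := isPreconnected_Ioo
    -- restrict to the subtype
    letI : TopologicalSpace (Ioo u v) := inferInstance
    have : IsLocallyConstant (fun p : Ioo u v => deriv f (p : ℝ)) := by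
      rw [IsLocallyConstant.iff_eventually_eq]
      intro p
      have h1 := hloc (p : ℝ) p.2
      have h2 : ∀ᶠ q in nhds p, deriv f ((q : Ioo u v) : ℝ) = deriv f (p : ℝ) := by
        rw [nhds_subtype_eq_comap]
        exact h1.comap _
      exact h2
    have hps : PreconnectedSpace (Ioo u v) :=
      Subtype.preconnectedSpace hpc
    exact this.apply_eq_of_preconnectedSpace ⟨x, hx⟩ ⟨w, hwmem⟩
  obtain ⟨m, U, hUo, hwU, hU⟩ := key w hwmem
  have hdw : deriv f w = (n:ℝ)^m := (hder w hwmem m U hUo hwU hU).deriv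
  refine ⟨m, ?_⟩
  -- MVT glue: g = f - n^m * id has zero derivative on the interior
  set c : ℝ := (n:ℝ)^m with hc'
  have hderall : ∀ x ∈ Ioo u v, HasDerivAt f c x := by
    intro x hx
    obtain ⟨m', U', hUo', hxU', hU'⟩ := key x hx
    have h := hder x hx m' U' hUo' hxU' hU'
    have : (n:ℝ)^m' = c := by rw [← h.deriv, hconst x hx, hdw]
    rwa [this] at h
  set g : ℝ → ℝ := fun t => f t - c * t with hg
  have hgder : ∀ x ∈ Ioo u v, HasDerivAt g 0 x := by
    intro x hx
    have := (hderall x hx).sub ((hasDerivAt_id x).const_mul c)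
    have h2 : HasDerivAt g (c - c * 1) x := this
    simpa using h2
  have hgv : ∀ u' ∈ Ioo u v, g v = g u' := by
    intro u' hu'
    have hcont : ContinuousOn g (Icc u' v) := (hc.sub (continuous_const.mul continuous_id)).continuousOn
    have hder' : ∀ x ∈ Ico u' v, HasDerivWithinAt g 0 (Ici x) x := by
      intro x hx
      exact (hgder x ⟨lt_of_lt_of_le hu'.1 hx.1, hx.2⟩).hasDerivWithinAt
    exact constant_of_has_deriv_right_zero hcont hder' v ⟨hu'.2.le, le_refl v⟩
  -- take the limit u' → u⁺
  have hlim1 : Tendsto g (nhdsWithin u (Ioi u)) (nhds (g u)) :=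
    ((hc.sub (continuous_const.mul continuous_id)).tendsto u).mono_left nhdsWithin_le_nhds
  have hlim2 : Tendsto g (nhdsWithin u (Ioi u)) (nhds (g v)) := by
    have hev : ∀ᶠ u' in nhdsWithin u (Ioi u), g u' = g v := by
      filter_upwards [Ioo_mem_nhdsGT_of_mem (left_mem_Ico.mpr huv)] with u' hu'
      exact (hgv u' hu').symm
    exact Tendsto.congr' (by filter_upwards [hev] with x h using h.symm) tendsto_const_nhds
  have : g u = g v := tendsto_nhds_unique hlim1 hlim2
  have : f u - c * u = f v - c * v := this
  linarith [this]


open Set Filter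

lemma adic_zero : IsNAdic n 0 := ⟨0, 0, by simp⟩

lemma adic_add (hn : 2 ≤ n) {r s : ℝ} (hr : IsNAdic n r) (hs : IsNAdic n s) :
    IsNAdic n (r + s) := by
  obtain ⟨a, k, rfl⟩ := hr
  obtain ⟨b, l, rfl⟩ := hs
  have hk : ((n:ℝ)) ≠ 0 := Nat.cast_ne_zero.mpr (by omega)
  exact ⟨a * (n:ℤ)^l + b * (n:ℤ)^k, k + l, by push_cast; rw [pow_add]; field_simp⟩

lemma adic_sub (hn : 2 ≤ n) {r s : ℝ} (hr : IsNAdic n r) (hs : IsNAdic n s) :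
    IsNAdic n (r - s) := by
  obtain ⟨a, k, rfl⟩ := hr
  obtain ⟨b, l, rfl⟩ := hs
  have hk : ((n:ℝ)) ≠ 0 := Nat.cast_ne_zero.mpr (by omega)
  exact ⟨a * (n:ℤ)^l - b * (n:ℤ)^k, k + l, by push_cast; rw [pow_add]; field_simp⟩


lemma ncong_refl (hn : 2 ≤ n) {r : ℝ} (hr : IsNAdic n r) : NCong n r r := by
  obtain ⟨a, k, rfl⟩ := hr
  exact ⟨a, a, k, rfl, rfl, by simp⟩

lemma breakpoint_induction (hn : 2 ≤ n) {f : ℝ → ℝ} (hc : Continuous f) {B : Finset ℝ}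
    (hB : ∀ x : ℝ, x ∉ B → ∃ m : ℤ, ∀ᶠ y in nhds x, f y = f x + (n : ℝ) ^ m * (y - x)) :
    ∀ (C : Finset ℝ), (∀ c ∈ C, IsNAdic n c) →
      ∀ u v : ℝ, u < v → IsNAdic n u → IsNAdic n v →
      (∀ p ∈ B, p ∈ Set.Ioo u v → p ∈ C) → NCong n (f v - f u) (v - u) := by
  intro C
  induction C using Finset.induction_on with
  | empty =>
      intro _ u v huv hu hv hsub
      obtain ⟨m, hm⟩ := gap_slope hn hc hB huv
        (fun p hp hpIoo => by simpa using hsub p hp hpIoo)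
      rw [hm]
      exact ncong_zpow_mul hn (adic_sub hn hv hu) m
  | @insert c C hc' ih =>
      intro hCad u v huv hu hv hsub
      have hCad' : ∀ x ∈ C, IsNAdic n x := fun x hx => hCad x (Finset.mem_insert_of_mem hx)
      by_cases hcm : c ∈ Set.Ioo u v
      · have hcad : IsNAdic n c := hCad c (Finset.mem_insert_self c C)
        have h1 : NCong n (f c - f u) (c - u) := by
          refine ih hCad' u c hcm.1 hu hcad (fun p hp hpI => ?_)
          have hpuv : p ∈ Set.Ioo u v := ⟨hpI.1, lt_trans hpI.2 hcm.2⟩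
          rcases Finset.mem_insert.mp (hsub p hp hpuv) with h | h
          · exact absurd (h ▸ hpI.2) (lt_irrefl c)
          · exact h
        have h2 : NCong n (f v - f c) (v - c) := by
          refine ih hCad' c v hcm.2 hcad hv (fun p hp hpI => ?_)
          have hpuv : p ∈ Set.Ioo u v := ⟨lt_trans hcm.1 hpI.1, hpI.2⟩
          rcases Finset.mem_insert.mp (hsub p hp hpuv) with h | h
          · exact absurd (h ▸ hpI.1) (lt_irrefl c)
          · exact h
        have h3 := ncong_add hn h2 h1
        have e1 : f v - f c + (f c - f u) = f v - f u := by ring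
        have e2 : v - c + (c - u) = v - u := by ring
        rwa [e1, e2] at h3
      · refine ih hCad' u v huv hu hv (fun p hp hpI => ?_)
        rcases Finset.mem_insert.mp (hsub p hp hpI) with h | h
        · exact absurd (h ▸ hpI) hcm
        · exact h

lemma forward (hn : 2 ≤ n) {f : ℝ → ℝ} (hf : IsThompsonFn n f) {a b : ℤ} {k l : ℕ}
    (hx0 : 0 < (a : ℝ) / (n:ℝ) ^ k)
    (hfx : f ((a : ℝ) / (n:ℝ) ^ k) = (b : ℝ) / (n:ℝ) ^ l) :
    ((n:ℤ) - 1) ∣ (b - a) := by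
  obtain ⟨hmono, hcont, hbd, B, hBad, hBslope⟩ := hf
  have hf0 : f 0 = 0 := hbd 0 (Or.inl le_rfl)
  have h := breakpoint_induction hn hcont hBslope B hBad 0 ((a:ℝ)/(n:ℝ)^k) hx0
    adic_zero ⟨a, k, rfl⟩ (fun p hp _ => hp)
  rw [hf0, hfx, sub_zero, sub_zero] at h
  exact ncong_dvd hn h rfl rfl

end FnAux

namespace FnAux4
open Set Filter

open Set Filter

/-- partial sums -/
def ps (d : ℕ → ℝ) (j : ℕ) : ℝ := ∑ i ∈ Finset.range j, d i

/-- piecewise linear map determined by source lengths `d` and target lengths `e` -/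
noncomputable def plF (N : ℕ) (d e : ℕ → ℝ) (t : ℝ) : ℝ :=
  t + ∑ i ∈ Finset.range N, (e i / d i - 1) * (min (max t (ps d i)) (ps d (i+1)) - ps d i)

variable {N : ℕ} {d e : ℕ → ℝ}

lemma ps_zero : ps d 0 = 0 := by simp [ps]

lemma ps_succ (j : ℕ) : ps d (j+1) = ps d j + d j := Finset.sum_range_succ d j

lemma ps_strictMono (hd : ∀ i, 0 < d i) : StrictMono (ps d) :=
  strictMono_nat_of_lt_succ (fun i => by rw [ps_succ]; linarith [hd i])

lemma ps_nonneg (hd : ∀ i, 0 < d i) (j : ℕ) : 0 ≤ ps d j := by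
  simpa [ps_zero] using (ps_strictMono hd).monotone (Nat.zero_le j)

lemma clamp2 (c a b : ℝ) (hab : a ≤ b) : min (max c a) b - a = min c b - min c a := by
  simp only [min_def, max_def]; split_ifs <;> linarith

lemma clamp1 (u a b : ℝ) (hab : a ≤ b) (hb : b ≤ 1) (ha : 0 ≤ a) :
    min (max u a) b = min (max (min (max u 0) 1) a) b := by
  simp only [min_def, max_def]; split_ifs <;> linarith

lemma sum_clamp (hd : ∀ i, 0 < d i) (hs1 : ps d N = 1) (t : ℝ) :
    ∑ i ∈ Finset.range N, (min (max t (ps d i)) (ps d (i+1)) - ps d i)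
      = min (max t 0) 1 := by
  set c : ℝ := min (max t 0) 1 with hc
  have hmono := (ps_strictMono hd).monotone
  have hterm : ∀ i ∈ Finset.range N,
      min (max t (ps d i)) (ps d (i+1)) - ps d i
        = min c (ps d (i+1)) - min c (ps d i) := by
    intro i hi
    have hiN : i + 1 ≤ N := Finset.mem_range.mp hi
    have hab : ps d i ≤ ps d (i+1) := hmono (Nat.le_succ i)
    have hb : ps d (i+1) ≤ 1 := hs1 ▸ hmono hiN
    have ha : 0 ≤ ps d i := ps_nonneg hd i
    rw [clamp1 t _ _ hab hb ha, clamp2 _ _ _ hab]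
  rw [Finset.sum_congr rfl hterm, Finset.sum_range_sub (fun j => min c (ps d j))]
  have hc0 : 0 ≤ c := le_min (le_max_right t 0) zero_le_one
  have hc1 : c ≤ 1 := min_le_right _ _
  rw [hs1, ps_zero, min_eq_left hc1, min_eq_right hc0, sub_zero]

lemma clampt_mono (a b : ℝ) : Monotone (fun t => min (max t a) b - a) := by
  intro t t' h
  simp only [sub_le_sub_iff_right]
  exact min_le_min (max_le_max h le_rfl) le_rfl

lemma hmono_aux : Monotone (fun t : ℝ => t - min (max t 0) 1) := by
  intro t t' h
  rcases le_total t 0 with h1 | h1 <;> rcases le_total t' 0 with h2 | h2 <;>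
    rcases le_total t 1 with h3 | h3 <;> rcases le_total t' 1 with h4 | h4 <;>
    simp [min_def, max_def] <;> split_ifs <;> linarith

lemma plF_eq (hd : ∀ i, 0 < d i) (hs1 : ps d N = 1) (t : ℝ) :
    plF N d e t = (t - min (max t 0) 1)
      + ∑ i ∈ Finset.range N, (e i / d i) * (min (max t (ps d i)) (ps d (i+1)) - ps d i) := by
  rw [plF]
  have : ∀ i ∈ Finset.range N,
      (e i / d i - 1) * (min (max t (ps d i)) (ps d (i+1)) - ps d i)
        = (e i / d i) * (min (max t (ps d i)) (ps d (i+1)) - ps d i)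
          - (min (max t (ps d i)) (ps d (i+1)) - ps d i) := by
    intro i _; ring
  rw [Finset.sum_congr rfl this, Finset.sum_sub_distrib, sum_clamp hd hs1]
  ring

lemma plF_strictMono (hd : ∀ i, 0 < d i) (he : ∀ i, 0 < e i) (hs1 : ps d N = 1) :
    StrictMono (plF N d e) := by
  intro t t' htt'
  rw [plF_eq hd hs1, plF_eq hd hs1]
  set g : ℕ → ℝ → ℝ := fun i t => min (max t (ps d i)) (ps d (i+1)) - ps d i with hg
  set h : ℝ → ℝ := fun t => t - min (max t 0) 1 with hh
  have hΔh : h t ≤ h t' := hmono_aux htt'.le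
  have hΔg : ∀ i, g i t ≤ g i t' := fun i => clampt_mono _ _ htt'.le
  have hr : ∀ i, 0 < e i / d i := fun i => div_pos (he i) (hd i)
  have hsumg : ∀ s : ℝ, ∑ i ∈ Finset.range N, g i s = min (max s 0) 1 :=
    fun s => sum_clamp hd hs1 s
  have hkey : (h t' - h t) + ∑ i ∈ Finset.range N, (g i t' - g i t) = t' - t := by
    rw [Finset.sum_sub_distrib, hsumg, hsumg, hh]
    simp only
    ring
  have hterm_nonneg : ∀ i ∈ Finset.range N, 0 ≤ (e i / d i) * (g i t' - g i t) :=
    fun i _ => mul_nonneg (hr i).le (sub_nonneg.mpr (hΔg i))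
  have hgoal : h t + ∑ i ∈ Finset.range N, (e i / d i) * g i t
      < h t' + ∑ i ∈ Finset.range N, (e i / d i) * g i t' := by
    rw [← sub_pos]
    have hdiff : (h t' + ∑ i ∈ Finset.range N, (e i / d i) * g i t')
        - (h t + ∑ i ∈ Finset.range N, (e i / d i) * g i t)
        = (h t' - h t) + ∑ i ∈ Finset.range N, (e i / d i) * (g i t' - g i t) := by
      have expand : ∑ i ∈ Finset.range N, (e i / d i) * (g i t' - g i t)
          = (∑ i ∈ Finset.range N, (e i / d i) * g i t')
            - ∑ i ∈ Finset.range N, (e i / d i) * g i t := by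
        rw [← Finset.sum_sub_distrib]
        exact Finset.sum_congr rfl (fun i _ => by ring)
      rw [expand]; ring
    rw [hdiff]
    rcases lt_or_eq_of_le hΔh with hlt | heq
    · have hnn : 0 ≤ ∑ i ∈ Finset.range N, (e i / d i) * (g i t' - g i t) :=
        Finset.sum_nonneg hterm_nonneg
      exact add_pos_of_pos_of_nonneg (sub_pos.mpr hlt) hnn
    · have hsum_pos : 0 < ∑ i ∈ Finset.range N, (g i t' - g i t) := by
        have := hkey
        rw [← heq] at this
        linarith
      have : ∑ i ∈ Finset.range N, (0:ℝ) < ∑ i ∈ Finset.range N, (g i t' - g i t) := by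
        simpa using hsum_pos
      obtain ⟨j, hjmem, hj⟩ := Finset.exists_lt_of_sum_lt this
      have hjpos : 0 < (e j / d j) * (g j t' - g j t) := mul_pos (hr j) (by linarith)
      have hle : (e j / d j) * (g j t' - g j t)
          ≤ ∑ i ∈ Finset.range N, (e i / d i) * (g i t' - g i t) :=
        Finset.single_le_sum hterm_nonneg hjmem
      have h0 : h t' - h t = 0 := by rw [heq, sub_self]
      rw [h0, zero_add]
      exact lt_of_lt_of_le hjpos hle
  simpa [hg, hh] using hgoal

lemma plF_continuous : Continuous (plF N d e) := by
  refine continuous_id.add (continuous_finset_sum _ (fun i _ => ?_))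
  exact continuous_const.mul
    (((continuous_id.max continuous_const).min continuous_const).sub continuous_const)

lemma plF_bd (hd : ∀ i, 0 < d i) (he : ∀ i, 0 < e i) (hs1 : ps d N = 1)
    (hσ1 : ps e N = 1) (t : ℝ) (ht : t ≤ 0 ∨ 1 ≤ t) : plF N d e t = t := by
  rcases ht with ht | ht
  · rw [plF]
    have : ∀ i ∈ Finset.range N,
        (e i / d i - 1) * (min (max t (ps d i)) (ps d (i+1)) - ps d i) = 0 := by
      intro i _
      have h1 : max t (ps d i) = ps d i := max_eq_right (ht.trans (ps_nonneg hd i))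
      have h2 : min (ps d i) (ps d (i+1)) = ps d i :=
        min_eq_left ((ps_strictMono hd).monotone (Nat.le_succ i))
      rw [h1, h2, sub_self, mul_zero]
    rw [Finset.sum_congr rfl this, Finset.sum_const_zero, add_zero]
  · rw [plF]
    have : ∀ i ∈ Finset.range N,
        (e i / d i - 1) * (min (max t (ps d i)) (ps d (i+1)) - ps d i)
          = e i - d i := by
      intro i hi
      have hiN : i + 1 ≤ N := Finset.mem_range.mp hi
      have hps1 : ps d (i+1) ≤ 1 := hs1 ▸ (ps_strictMono hd).monotone hiN
      have hpsi : ps d i ≤ t := le_trans (le_trans ((ps_strictMono hd).monotone (Nat.le_succ i)) hps1) ht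
      have h1 : max t (ps d i) = t := max_eq_left hpsi
      have h2 : min t (ps d (i+1)) = ps d (i+1) := min_eq_right (hps1.trans ht)
      rw [h1, h2, ps_succ]
      have hne := (hd i).ne'
      field_simp
      ring
    rw [Finset.sum_congr rfl this, Finset.sum_sub_distrib]
    have e1 : ∑ i ∈ Finset.range N, e i = 1 := hσ1
    have e2 : ∑ i ∈ Finset.range N, d i = 1 := hs1
    rw [e1, e2]
    ring

lemma plF_affine_on (hd : ∀ i, 0 < d i) {j : ℕ} (hjN : j < N) :
    ∀ y : ℝ, ps d j ≤ y → y < ps d (j+1) →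
      plF N d e y = ps e j + (e j / d j) * (y - ps d j) := by
  intro y hy1 hy2
  have hmono := (ps_strictMono (d := d) hd).monotone
  rw [plF, Finset.range_eq_Ico,
    ← Finset.sum_Ico_consecutive _ (Nat.zero_le j) hjN.le,
    ← Finset.sum_Ico_consecutive _ (Nat.le_succ j) hjN]
  have h1 : ∀ i ∈ Finset.Ico 0 j,
      (e i / d i - 1) * (min (max y (ps d i)) (ps d (i+1)) - ps d i) = e i - d i := by
    intro i hi
    have hij : i + 1 ≤ j := Finset.mem_Ico.mp hi |>.2
    have hsi : ps d (i+1) ≤ y := le_trans (hmono hij) hy1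
    have hsi' : ps d i ≤ y := le_trans (hmono (Nat.le_succ i)) hsi
    rw [max_eq_left hsi', min_eq_right hsi, ps_succ]
    have hne := (hd i).ne'
    field_simp
    ring
  have h2 : ∀ i ∈ Finset.Ico (j+1) N,
      (e i / d i - 1) * (min (max y (ps d i)) (ps d (i+1)) - ps d i) = 0 := by
    intro i hi
    have hij : j + 1 ≤ i := Finset.mem_Ico.mp hi |>.1
    have hsi : y ≤ ps d i := le_trans hy2.le (hmono hij)
    rw [max_eq_right hsi, min_eq_left (hmono (Nat.le_succ i)), sub_self, mul_zero]
  rw [Finset.sum_congr rfl h1, Finset.sum_congr rfl h2, Finset.sum_const_zero,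
    Nat.Ico_succ_singleton, Finset.sum_singleton]
  rw [max_eq_left hy1, min_eq_left hy2.le, ← Finset.range_eq_Ico, Finset.sum_sub_distrib]
  have hpse : ∑ i ∈ Finset.range j, e i = ps e j := rfl
  have hpsd : ∑ i ∈ Finset.range j, d i = ps d j := rfl
  rw [hpse, hpsd]
  ring

lemma plF_node (hd : ∀ i, 0 < d i) {j : ℕ} (hjN : j < N) :
    plF N d e (ps d j) = ps e j := by
  have := plF_affine_on (e := e) hd hjN (ps d j) le_rfl (by rw [ps_succ]; linarith [hd j])
  simpa using this

lemma plF_slope {n : ℕ} (hd : ∀ i, 0 < d i) (he : ∀ i, 0 < e i)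
    (hs1 : ps d N = 1) (hσ1 : ps e N = 1)
    (hratio : ∀ i, ∃ m : ℤ, e i / d i = (n:ℝ)^m) :
    ∀ x : ℝ, x ∉ (Finset.range (N+1)).image (ps d) →
      ∃ m : ℤ, ∀ᶠ y in nhds x, plF N d e y = plF N d e x + (n:ℝ)^m * (y - x) := by
  intro x hx
  have h0B : ps d 0 ∈ (Finset.range (N+1)).image (ps d) :=
    Finset.mem_image_of_mem _ (Finset.mem_range.mpr (by omega))
  have h1B : ps d N ∈ (Finset.range (N+1)).image (ps d) :=
    Finset.mem_image_of_mem _ (Finset.mem_range.mpr (by omega))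
  rcases lt_trichotomy x 0 with hlt | heq | hgt0
  · refine ⟨0, ?_⟩
    filter_upwards [Iio_mem_nhds hlt] with y hy
    rw [plF_bd hd he hs1 hσ1 y (Or.inl (le_of_lt hy)),
      plF_bd hd he hs1 hσ1 x (Or.inl hlt.le)]
    simp
  · exact absurd (heq ▸ (ps_zero (d := d) ▸ h0B)) hx
  rcases lt_trichotomy x 1 with hlt1 | heq1 | hgt1
  · -- main case : 0 < x < 1
    set T := (Finset.range (N+1)).filter (fun i => ps d i < x) with hT
    have h0T : 0 ∈ T := by
      simp only [hT, Finset.mem_filter, Finset.mem_range, ps_zero]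
      exact ⟨by omega, hgt0⟩
    have hTne : T.Nonempty := ⟨0, h0T⟩
    set j := T.max' hTne with hj
    have hjT := T.max'_mem hTne
    rw [Finset.mem_filter, Finset.mem_range] at hjT
    have hj1 : ps d j < x := hjT.2
    have hjN : j < N := by
      rcases Nat.lt_or_ge j N with h | h
      · exact h
      · exfalso
        have : j = N := by omega
        rw [this, hs1] at hj1
        linarith
    have hj2 : x < ps d (j+1) := by
      have hnotT : j + 1 ∉ T := fun h => absurd (T.le_max' _ h) (by omega)
      have hnlt : ¬ (ps d (j+1) < x) := fun hlt =>
        hnotT (Finset.mem_filter.mpr ⟨Finset.mem_range.mpr (by omega), hlt⟩)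
      have hne : x ≠ ps d (j+1) := fun h =>
        hx (h ▸ Finset.mem_image_of_mem _ (Finset.mem_range.mpr (by omega)))
      exact lt_of_le_of_ne (not_lt.mp hnlt) hne
    obtain ⟨m, hm⟩ := hratio j
    refine ⟨m, ?_⟩
    filter_upwards [Ioo_mem_nhds hj1 hj2] with y hy
    rw [plF_affine_on hd hjN y hy.1.le hy.2, plF_affine_on hd hjN x hj1.le hj2, ← hm]
    ring
  · exact absurd (show x ∈ _ by rw [heq1, ← hs1]; exact h1B) hx
  · refine ⟨0, ?_⟩
    filter_upwards [Ioi_mem_nhds hgt1] with y hy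
    rw [plF_bd hd he hs1 hσ1 y (Or.inr (le_of_lt hy)),
      plF_bd hd he hs1 hσ1 x (Or.inr hgt1.le)]
    simp


end FnAux4

namespace FnAux5


/-- exponents splitting `n^{-K}` into `1 + c*(n-1)` pieces -/
def splitL (n K : ℕ) : ℕ → List ℕ
  | 0 => [K]
  | (c+1) => List.replicate (n-1) (K+1) ++ splitL n (K+1) (c)

lemma splitL_length (n K c : ℕ) : (splitL n K c).length = 1 + c * (n-1) := by
  induction c generalizing K with
  | zero => simp [splitL]
  | succ c ih => simp [splitL, ih]; ring

lemma splitL_sum {n : ℕ} (hn : 2 ≤ n) (K c : ℕ) :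
    ((splitL n K c).map (fun e => ((n:ℝ)^e)⁻¹)).sum = ((n:ℝ)^K)⁻¹ := by
  have hnR : (1:ℝ) ≤ (n:ℝ) := by exact_mod_cast (by omega : 1 ≤ n)
  have hne : (n:ℝ) ≠ 0 := by positivity
  induction c generalizing K with
  | zero => simp [splitL]
  | succ c ih =>
    rw [splitL, List.map_append, List.sum_append, ih (K+1),
      List.map_replicate, List.sum_replicate, nsmul_eq_mul]
    rw [Nat.cast_sub (by omega : 1 ≤ n), pow_succ]
    field_simp
    ring

/-- exponents splitting `A/n^K` into `A + c*(n-1)` pieces -/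
def repL (n A K c : ℕ) : List ℕ := List.replicate (A-1) K ++ splitL n K c

lemma repL_length {n : ℕ} (A K c : ℕ) (hA : 1 ≤ A) :
    (repL n A K c).length = A + c * (n-1) := by
  simp [repL, splitL_length]
  omega

lemma repL_sum {n : ℕ} (hn : 2 ≤ n) (A K c : ℕ) (hA : 1 ≤ A) :
    ((repL n A K c).map (fun e => ((n:ℝ)^e)⁻¹)).sum = (A:ℝ) / (n:ℝ)^K := by
  have hne : (n:ℝ) ≠ 0 := by positivity
  rw [repL, List.map_append, List.sum_append, splitL_sum hn K c,
    List.map_replicate, List.sum_replicate, nsmul_eq_mul]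
  rw [Nat.cast_sub hA]
  field_simp
  push_cast; ring

lemma sum_range_getD (l : List ℕ) (F : ℕ → ℝ) :
    ∑ i ∈ Finset.range l.length, F (l.getD i 0) = (l.map F).sum := by
  induction l with
  | nil => simp
  | cons x xs ih =>
    rw [List.length_cons, Finset.sum_range_succ']
    simp only [List.getD_cons_succ, List.getD_cons_zero, ih]
    rw [List.map_cons, List.sum_cons]
    ring

lemma sum_range_getD_prefix (l1 l2 : List ℕ) (F : ℕ → ℝ) :
    ∑ i ∈ Finset.range l1.length, F ((l1 ++ l2).getD i 0) = (l1.map F).sum := by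
  rw [← sum_range_getD l1 F]
  refine Finset.sum_congr rfl (fun i hi => ?_)
  rw [List.getD_append _ _ _ _ (Finset.mem_range.mp hi)]


end FnAux5

namespace FnFinal
open FnAux FnAux4 FnAux5

lemma ps_adic {n : ℕ} (hn : 2 ≤ n) (D : List ℕ) :
    ∀ j, IsNAdic n (ps (fun i => ((n:ℝ)^(D.getD i 0))⁻¹) j) := by
  intro j
  induction j with
  | zero => exact ps_zero (d := fun i => ((n:ℝ)^(D.getD i 0))⁻¹) ▸ adic_zero
  | succ j ih =>
    rw [ps_succ]
    refine adic_add hn ih ⟨1, D.getD j 0, ?_⟩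
    push_cast
    rw [one_div]

lemma exists_c {n : ℕ} (hn : 2 ≤ n) {A B : ℕ} (h : ((n:ℤ)-1) ∣ (B:ℤ) - (A:ℤ)) :
    ∃ c : ℕ, max A B = A + c * (n-1) := by
  rcases le_total B A with hBA | hAB
  · exact ⟨0, by rw [max_eq_left hBA]; simp⟩
  · obtain ⟨c, hc⟩ := h
    have h2Z : (2:ℤ) ≤ (n:ℤ) := by exact_mod_cast hn
    have hc0 : 0 ≤ c := by
      have h1 : (0:ℤ) ≤ (B:ℤ) - A := by
        have : (A:ℤ) ≤ (B:ℤ) := by exact_mod_cast hAB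
        omega
      nlinarith [hc]
    refine ⟨c.toNat, ?_⟩
    have hfin : ((max A B : ℕ) : ℤ) = ((A + c.toNat * (n-1) : ℕ) : ℤ) := by
      rw [max_eq_right hAB]
      push_cast [Nat.cast_sub (show 1 ≤ n by omega), Int.toNat_of_nonneg hc0]
      linear_combination hc
    exact_mod_cast hfin

lemma sum_range_getD'' (n : ℕ) (l : List ℕ) :
    ∑ i ∈ Finset.range l.length, ((n:ℝ)^(l.getD i 0))⁻¹
      = (l.map (fun E => ((n:ℝ)^E)⁻¹)).sum :=
  sum_range_getD l (fun E => ((n:ℝ)^E)⁻¹)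

lemma sum_range_getD_prefix'' (n : ℕ) (l1 l2 : List ℕ) :
    ∑ i ∈ Finset.range l1.length, ((n:ℝ)^((l1 ++ l2).getD i 0))⁻¹
      = (l1.map (fun E => ((n:ℝ)^E)⁻¹)).sum :=
  sum_range_getD_prefix l1 l2 (fun E => ((n:ℝ)^E)⁻¹)

lemma reverse_core {n : ℕ} (hn : 2 ≤ n) (L1 L2 M1 M2 : List ℕ)
    (hl1 : M1.length = L1.length) (hl2 : M2.length = L2.length)
    (hL2 : L2 ≠ []) {x y : ℝ}
    (hx : ((L1).map (fun E => ((n:ℝ)^E)⁻¹)).sum = x)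
    (hy : ((M1).map (fun E => ((n:ℝ)^E)⁻¹)).sum = y)
    (hsum : (((L1++L2)).map (fun E => ((n:ℝ)^E)⁻¹)).sum = 1)
    (hsum' : (((M1++M2)).map (fun E => ((n:ℝ)^E)⁻¹)).sum = 1) :
    ∃ f : ℝ → ℝ, IsThompsonFn n f ∧ f x = y := by
  have hneR : (n:ℝ) ≠ 0 := by positivity
  set DL : List ℕ := L1 ++ L2 with hDL
  set EL : List ℕ := M1 ++ M2 with hEL
  set N : ℕ := DL.length with hN
  have hNe : EL.length = N := by
    rw [hEL, hN, hDL, List.length_append, List.length_append, hl1, hl2]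
  set d : ℕ → ℝ := fun i => ((n:ℝ)^(DL.getD i 0))⁻¹ with hdd
  set e : ℕ → ℝ := fun i => ((n:ℝ)^(EL.getD i 0))⁻¹ with hee
  have hd : ∀ i, 0 < d i := fun i => by rw [hdd]; positivity
  have he : ∀ i, 0 < e i := fun i => by rw [hee]; positivity
  have hs1 : ps d N = 1 := by
    show ∑ i ∈ Finset.range DL.length, ((n:ℝ)^(DL.getD i 0))⁻¹ = 1
    rw [sum_range_getD'' n DL]
    exact hsum
  have hσ1 : ps e N = 1 := by
    show ∑ i ∈ Finset.range N, ((n:ℝ)^(EL.getD i 0))⁻¹ = 1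
    rw [← hNe, sum_range_getD'' n EL]
    exact hsum'
  have hratio : ∀ i, ∃ m : ℤ, e i / d i = (n:ℝ)^m := by
    intro i
    refine ⟨(DL.getD i 0 : ℤ) - (EL.getD i 0 : ℤ), ?_⟩
    show ((n:ℝ)^(EL.getD i 0))⁻¹ / ((n:ℝ)^(DL.getD i 0))⁻¹ = _
    rw [div_eq_mul_inv, inv_inv, ← zpow_natCast (n:ℝ) (EL.getD i 0),
      ← zpow_natCast (n:ℝ) (DL.getD i 0), ← zpow_neg, ← zpow_add₀ hneR]
    congr 1
    ring
  have hadic : ∀ j, IsNAdic n (ps d j) := fun j => ps_adic hn DL j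
  have hxnode : ps d L1.length = x := by
    show ∑ i ∈ Finset.range L1.length, ((n:ℝ)^((L1 ++ L2).getD i 0))⁻¹ = x
    rw [sum_range_getD_prefix'' n L1 L2]
    exact hx
  have hynode : ps e L1.length = y := by
    show ∑ i ∈ Finset.range L1.length, ((n:ℝ)^((M1 ++ M2).getD i 0))⁻¹ = y
    rw [← hl1, sum_range_getD_prefix'' n M1 M2]
    exact hy
  have ht1N : L1.length < N := by
    rw [hN, hDL, List.length_append]
    have := List.length_pos_iff.mpr hL2
    omega
  refine ⟨plF N d e, ⟨plF_strictMono hd he hs1, plF_continuous,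
    fun t ht => plF_bd hd he hs1 hσ1 t ht,
    (Finset.range (N+1)).image (ps d), ?_, plF_slope hd he hs1 hσ1 hratio⟩, ?_⟩
  · intro p hp
    obtain ⟨j, _, rfl⟩ := Finset.mem_image.mp hp
    exact hadic j
  · rw [← hxnode, plF_node hd ht1N, hynode]

lemma repL_ne_nil {n A K c : ℕ} (hA : 1 ≤ A) : repL n A K c ≠ [] := by
  intro h
  have := repL_length (n := n) A K c hA
  rw [h] at this
  simp at this
  omega

lemma reverse {n : ℕ} (hn : 2 ≤ n) {a k b l : ℕ}
    (hx0 : 0 < (a : ℝ) / (n:ℝ) ^ k) (hx1 : (a : ℝ) / (n:ℝ) ^ k < 1)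
    (hy0 : 0 < (b : ℝ) / (n:ℝ) ^ l) (hy1 : (b : ℝ) / (n:ℝ) ^ l < 1)
    (hmod : ((n:ℤ) - 1) ∣ ((b:ℤ) - (a:ℤ))) :
    ∃ f : ℝ → ℝ, IsThompsonFn n f ∧ f ((a : ℝ) / (n:ℝ) ^ k) = (b : ℝ) / (n:ℝ) ^ l := by
  have hnR : (0:ℝ) < (n:ℝ) := npos hn
  have hneR : (n:ℝ) ≠ 0 := hnR.ne'
  have h2Z : (2:ℤ) ≤ (n:ℤ) := by exact_mod_cast hn
  set K := max k l with hK
  have hkK : k ≤ K := le_max_left k l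
  have hlK : l ≤ K := le_max_right k l
  set A := a * n^(K-k) with hA
  set B := b * n^(K-l) with hB
  have ha1 : 1 ≤ a := by
    by_contra h
    have : a = 0 := by omega
    rw [this] at hx0; simp at hx0
  have hb1 : 1 ≤ b := by
    by_contra h
    have : b = 0 := by omega
    rw [this] at hy0; simp at hy0
  have hak : a < n^k := by
    have := (div_lt_one (pow_pos hnR k)).mp hx1
    exact_mod_cast this
  have hbl : b < n^l := by
    have := (div_lt_one (pow_pos hnR l)).mp hy1
    exact_mod_cast this
  have hnk1 : 1 ≤ n^(K-k) := Nat.one_le_pow _ _ (by omega)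
  have hnl1 : 1 ≤ n^(K-l) := Nat.one_le_pow _ _ (by omega)
  have hA1 : 1 ≤ A := Nat.mul_le_mul ha1 hnk1
  have hB1 : 1 ≤ B := Nat.mul_le_mul hb1 hnl1
  have hAK : A < n^K := by
    calc A = a * n^(K-k) := rfl
    _ < n^k * n^(K-k) := mul_lt_mul_of_pos_right hak (by positivity)
    _ = n^K := by rw [← pow_add]; congr 1; omega
  have hBK : B < n^K := by
    calc B = b * n^(K-l) := rfl
    _ < n^l * n^(K-l) := mul_lt_mul_of_pos_right hbl (by positivity)
    _ = n^K := by rw [← pow_add]; congr 1; omega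
  have hpowK : (n:ℝ)^K = (n:ℝ)^k * (n:ℝ)^(K-k) := by rw [← pow_add]; congr 1; omega
  have hpowK' : (n:ℝ)^K = (n:ℝ)^l * (n:ℝ)^(K-l) := by rw [← pow_add]; congr 1; omega
  have hxA : (A:ℝ) / (n:ℝ)^K = (a:ℝ) / (n:ℝ)^k := by
    rw [hpowK, hA]
    push_cast
    field_simp
  have hyB : (B:ℝ) / (n:ℝ)^K = (b:ℝ) / (n:ℝ)^l := by
    rw [hpowK', hB]
    push_cast
    field_simp
  have hABd : ((n:ℤ)-1) ∣ (B:ℤ) - (A:ℤ) := by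
    have e1 : (B:ℤ) - (A:ℤ)
        = ((b:ℤ) * (n:ℤ)^(K-l) - b) - ((a:ℤ) * (n:ℤ)^(K-k) - a) + ((b:ℤ) - a) := by
      push_cast [hA, hB]; ring
    rw [e1]
    exact dvd_add (dvd_sub (mul_pow_cong (b:ℤ) (K-l)) (mul_pow_cong (a:ℤ) (K-k))) hmod
  have hBAd : ((n:ℤ)-1) ∣ (A:ℤ) - (B:ℤ) := by
    have e2 : (A:ℤ) - B = -((B:ℤ) - A) := by ring
    rw [e2]; exact dvd_neg.mpr hABd
  set A' := n^K - A with hA'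
  set B' := n^K - B with hB'
  have hA'1 : 1 ≤ A' := by omega
  have hB'1 : 1 ≤ B' := by omega
  have hA'Bd : ((n:ℤ)-1) ∣ (B':ℤ) - (A':ℤ) := by
    have e1 : (B':ℤ) - (A':ℤ) = (A:ℤ) - B := by
      push_cast [hA', hB', Nat.cast_sub hAK.le, Nat.cast_sub hBK.le]
      ring
    rw [e1]; exact hBAd
  have hB'Ad : ((n:ℤ)-1) ∣ (A':ℤ) - (B':ℤ) := by
    have e2 : (A':ℤ) - B' = -((B':ℤ) - A') := by ring
    rw [e2]; exact dvd_neg.mpr hA'Bd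
  obtain ⟨cA, hcA⟩ := exists_c hn hABd
  obtain ⟨cB0, hcB0⟩ := exists_c hn (A := B) (B := A) hBAd
  have hcB : max A B = B + cB0 * (n-1) := by rw [max_comm]; exact hcB0
  obtain ⟨cA', hcA'⟩ := exists_c hn hA'Bd
  obtain ⟨cB1, hcB1⟩ := exists_c hn (A := B') (B := A') hB'Ad
  have hcB' : max A' B' = B' + cB1 * (n-1) := by rw [max_comm]; exact hcB1
  -- lengths match
  have hlen1 : (repL n B K cB0).length = (repL n A K cA).length := by
    rw [repL_length _ _ _ hB1, repL_length _ _ _ hA1]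
    omega
  have hlen2 : (repL n B' K cB1).length = (repL n A' K cA').length := by
    rw [repL_length _ _ _ hB'1, repL_length _ _ _ hA'1]
    omega
  -- sums
  have hsumAA' : (((repL n A K cA ++ repL n A' K cA')).map
      (fun E => ((n:ℝ)^E)⁻¹)).sum = 1 := by
    rw [List.map_append, List.sum_append, repL_sum hn A K cA hA1, repL_sum hn A' K cA' hA'1]
    rw [← add_div]
    have : (A:ℝ) + (A':ℝ) = (n:ℝ)^K := by
      rw [hA', Nat.cast_sub hAK.le]; push_cast; ring
    rw [this, div_self (by positivity)]
  have hsumBB' : (((repL n B K cB0 ++ repL n B' K cB1)).map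
      (fun E => ((n:ℝ)^E)⁻¹)).sum = 1 := by
    rw [List.map_append, List.sum_append, repL_sum hn B K cB0 hB1, repL_sum hn B' K cB1 hB'1]
    rw [← add_div]
    have : (B:ℝ) + (B':ℝ) = (n:ℝ)^K := by
      rw [hB', Nat.cast_sub hBK.le]; push_cast; ring
    rw [this, div_self (by positivity)]
  refine reverse_core hn (repL n A K cA) (repL n A' K cA') (repL n B K cB0) (repL n B' K cB1)
    hlen1 hlen2 (repL_ne_nil hA'1) ?_ ?_ hsumAA' hsumBB'
  · rw [repL_sum hn A K cA hA1]; exact hxA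
  · rw [repL_sum hn B K cB0 hB1]; exact hyB

end FnFinal

/-- for `n ≥ 2` and `n`-adic rationals `x = a/n^k`, `y = b/n^ℓ` in
`(0,1)`, there is `f ∈ F_n` with `f x = y` if and only if `a ≡ b (mod n-1)`. -/
theorem Fn_orbit_iff_congruent (n a k b l : ℕ) (hn : 2 ≤ n)
    (hx0 : 0 < (a : ℝ) / n ^ k) (hx1 : (a : ℝ) / n ^ k < 1)
    (hy0 : 0 < (b : ℝ) / n ^ l) (hy1 : (b : ℝ) / n ^ l < 1) :
    (∃ f : ℝ → ℝ, IsThompsonFn n f ∧ f ((a : ℝ) / n ^ k) = (b : ℝ) / n ^ l) ↔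
      (a : ℤ) ≡ (b : ℤ) [ZMOD ((n : ℤ) - 1)] := by
  constructor
  · rintro ⟨f, hf, hfx⟩
    have h := FnAux.forward hn (f := f) hf (a := (a:ℤ)) (b := (b:ℤ)) (k := k) (l := l)
      (by push_cast; exact hx0) (by push_cast; exact hfx)
    exact Int.modEq_iff_dvd.mpr h
  · intro hmod
    exact FnFinal.reverse hn hx0 hx1 hy0 hy1 (Int.ModEq.dvd hmod)
end

section
/- Let n ≥ 2 and let x = a/n^k be an n-adic rational in (0,1) written in lowest n-adic terms. If f ∈ F_n and f(x) = b/n^ℓ, then the sum of the base-n digits of x is congruent modulo n−1 to the sum of the base-n digits of f(x). Equivalently, a ≡ b (mod n−1) is an invariant of the F_n-orbit of x. -/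
def SAdic (n : ℕ) : Set ℝ :=
  { r | ∃ (p : ℤ) (j : ℕ), r = p / n ^ j ∧ ((n : ℤ) - 1) ∣ p }

lemma SAdic_zero (n : ℕ) : (0 : ℝ) ∈ SAdic n :=
  ⟨0, 0, by simp, dvd_zero _⟩

lemma SAdic_add {n : ℕ} (hn : 2 ≤ n) {x y : ℝ} (hx : x ∈ SAdic n) (hy : y ∈ SAdic n) :
    x + y ∈ SAdic n := by
  obtain ⟨p, j, rfl, hp⟩ := hx
  obtain ⟨q, i, rfl, hq⟩ := hy
  have hnR : (n : ℝ) ≠ 0 := by positivity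
  refine ⟨p * n ^ i + q * n ^ j, j + i, ?_, ?_⟩
  · rw [div_add_div _ _ (pow_ne_zero j hnR) (pow_ne_zero i hnR), pow_add]
    push_cast
    ring_nf
  · exact dvd_add (hp.mul_right _) (hq.mul_right _)

lemma IsNAdic.sub' {n : ℕ} {x y : ℝ} (hx : IsNAdic n x) (hy : IsNAdic n y) (hn : 2 ≤ n) :
    IsNAdic n (x - y) := by
  obtain ⟨p, j, rfl⟩ := hx
  obtain ⟨q, i, rfl⟩ := hy
  have hnR : (n : ℝ) ≠ 0 := by positivity
  refine ⟨p * n ^ i - q * n ^ j, j + i, ?_⟩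
  rw [div_sub_div _ _ (pow_ne_zero j hnR) (pow_ne_zero i hnR), pow_add]
  push_cast
  ring_nf

lemma SAdic_zpow_sub_one_mul {n : ℕ} (hn : 2 ≤ n) (m : ℤ) {x : ℝ} (hx : IsNAdic n x) :
    ((n : ℝ) ^ m - 1) * x ∈ SAdic n := by
  obtain ⟨p, j, rfl⟩ := hx
  have hnR : (n : ℝ) ≠ 0 := by positivity
  cases m with
  | ofNat e =>
    refine ⟨((n : ℤ) ^ e - 1) * p, j, ?_, Dvd.dvd.mul_right ?_ _⟩
    · rw [Int.ofNat_eq_coe, zpow_natCast]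
      push_cast
      ring
    · simpa using sub_dvd_pow_sub_pow (n : ℤ) 1 e
  | negSucc e =>
    refine ⟨(1 - (n : ℤ) ^ (e + 1)) * p, j + (e + 1), ?_, Dvd.dvd.mul_right ?_ _⟩
    · rw [zpow_negSucc, pow_add]
      push_cast
      field_simp
      ring
    · have h1 : ((n : ℤ) - 1) ∣ (n : ℤ) ^ (e + 1) - 1 := by
        simpa using sub_dvd_pow_sub_pow (n : ℤ) 1 (e + 1)
      have h2 := dvd_neg.mpr h1
      rwa [neg_sub] at h2

lemma slope_eq_of_eventually {c1 s1 c2 s2 z : ℝ}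
    (h : ∀ᶠ y in nhds z, c1 + s1 * y = c2 + s2 * y) : s1 = s2 ∧ c1 = c2 := by
  rw [Metric.eventually_nhds_iff] at h
  obtain ⟨ε, hε, hball⟩ := h
  have h1 : c1 + s1 * z = c2 + s2 * z := hball (by simp [hε])
  have h2 : c1 + s1 * (z + ε / 2) = c2 + s2 * (z + ε / 2) := by
    apply hball
    simp only [Real.dist_eq]
    rw [abs_of_nonneg (by linarith)]
    linarith
  have hs : s1 = s2 := by
    have : s1 * (ε / 2) = s2 * (ε / 2) := by linarith
    have hε2 : ε / 2 ≠ 0 := by positivity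
    field_simp at this
    exact this
  exact ⟨hs, by rw [hs] at h1; linarith⟩

lemma affine_between (n : ℕ) (hn : 2 ≤ n) (f : ℝ → ℝ) (hc : Continuous f)
    (u v : ℝ) (huv : u < v)
    (h : ∀ x ∈ Set.Ioo u v, ∃ m : ℤ, ∀ᶠ y in nhds x, f y = f x + (n : ℝ) ^ m * (y - x)) :
    ∃ m : ℤ, f v = f u + (n : ℝ) ^ m * (v - u) := by
  set x0 : ℝ := (u + v) / 2 with hx0def
  have hx0 : x0 ∈ Set.Ioo u v := ⟨by simp [hx0def]; linarith, by simp [hx0def]; linarith⟩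
  obtain ⟨m0, hm0⟩ := h x0 hx0
  set L : ℝ → ℝ := fun y => f x0 + (n : ℝ) ^ m0 * (y - x0) with hLdef
  set O : Set ℝ := {x | ∀ᶠ y in nhds x, f y = L y} with hOdef
  have hO : IsOpen O := isOpen_setOf_eventually_nhds
  have hx0O : x0 ∈ O := hm0
  have h' : ∀ x : ℝ, x ∈ Set.Ioo u v →
      ∃ m : ℤ, ∃ t : Set ℝ, IsOpen t ∧ x ∈ t ∧ ∀ y ∈ t, f y = f x + (n : ℝ) ^ m * (y - x) := by
    intro x hx
    obtain ⟨m, hm⟩ := h x hx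
    rw [eventually_nhds_iff] at hm
    obtain ⟨t, h1, h2, h3⟩ := hm
    exact ⟨m, t, h2, h3, h1⟩
  choose M T hTopen hTmem hTeq using h'
  have key : ∀ x (hx : x ∈ Set.Ioo u v), (T x hx ∩ O).Nonempty → x ∈ O := by
    rintro x hx ⟨z, hzT, hzO⟩
    have hzT' : ∀ᶠ y in nhds z, y ∈ T x hx := (hTopen x hx).eventually_mem hzT
    have hE : ∀ᶠ y in nhds z,
        (f x - (n : ℝ) ^ (M x hx) * x) + (n : ℝ) ^ (M x hx) * y
          = (f x0 - (n : ℝ) ^ m0 * x0) + (n : ℝ) ^ m0 * y := by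
      filter_upwards [hzO, hzT'] with y hy1 hy2
      have := hTeq x hx y hy2
      rw [hy1] at this
      simp only [hLdef] at this ⊢
      ring_nf
      ring_nf at this
      linarith
    obtain ⟨hs, hcc⟩ := slope_eq_of_eventually hE
    have : ∀ y ∈ T x hx, f y = L y := by
      intro y hy
      have h1 := hTeq x hx y hy
      simp only [hLdef]
      rw [h1, hs]
      rw [hs] at hcc
      linear_combination hcc
    exact Filter.eventually_iff_exists_mem.mpr
      ⟨T x hx, (hTopen x hx).mem_nhds (hTmem x hx), this⟩
  have hsub : Set.Ioo u v ⊆ O := by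
    by_contra hsub
    obtain ⟨w, hw, hwO⟩ := Set.not_subset.mp hsub
    set V : Set ℝ := ⋃ (x : ℝ) (hx : x ∈ Set.Ioo u v) (_ : x ∉ O), T x hx with hVdef
    have hVopen : IsOpen V := by
      refine isOpen_iUnion fun x => isOpen_iUnion fun hx => isOpen_iUnion fun _ => hTopen x hx
    have hcover : Set.Ioo u v ⊆ O ∪ V := by
      intro x hx
      by_cases hxO : x ∈ O
      · exact Or.inl hxO
      · exact Or.inr (Set.mem_iUnion.mpr ⟨x, Set.mem_iUnion.mpr ⟨hx, Set.mem_iUnion.mpr ⟨hxO, hTmem x hx⟩⟩⟩)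
    have hne1 : (Set.Ioo u v ∩ O).Nonempty := ⟨x0, hx0, hx0O⟩
    have hne2 : (Set.Ioo u v ∩ V).Nonempty :=
      ⟨w, hw, Set.mem_iUnion.mpr ⟨w, Set.mem_iUnion.mpr ⟨hw, Set.mem_iUnion.mpr ⟨hwO, hTmem w hw⟩⟩⟩⟩
    obtain ⟨z, hzI, hzO, hzV⟩ := isPreconnected_Ioo (a := u) (b := v) O V hO hVopen hcover hne1 hne2
    obtain ⟨x, hxmem⟩ := Set.mem_iUnion.mp hzV
    obtain ⟨hx, hxmem⟩ := Set.mem_iUnion.mp hxmem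
    obtain ⟨hxO, hzT⟩ := Set.mem_iUnion.mp hxmem
    exact hxO (key x hx ⟨z, hzT, hzO⟩)
  have hIcc : ∀ x ∈ Set.Icc u v, f x = L x := by
    have hclosed : IsClosed {y : ℝ | f y = L y} := by
      apply isClosed_eq hc
      simp only [hLdef]
      continuity
    have h1 : Set.Ioo u v ⊆ {y : ℝ | f y = L y} := fun x hx => (hsub hx).self_of_nhds
    have h2 : closure (Set.Ioo u v) ⊆ {y : ℝ | f y = L y} := hclosed.closure_subset_iff.mpr h1
    rw [closure_Ioo huv.ne] at h2
    exact fun x hx => h2 hx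
  refine ⟨m0, ?_⟩
  have h1 := hIcc v (Set.right_mem_Icc.mpr huv.le)
  have h2 := hIcc u (Set.left_mem_Icc.mpr huv.le)
  simp only [hLdef] at h1 h2
  rw [h1, h2]
  ring

lemma Fn_S (n : ℕ) (hn : 2 ≤ n) (f : ℝ → ℝ) (hc : Continuous f)
    (hbdry : ∀ x : ℝ, x ≤ 0 ∨ 1 ≤ x → f x = x)
    (B : Finset ℝ) (hBadic : ∀ b ∈ B, IsNAdic n b)
    (hB : ∀ x : ℝ, x ∉ B → ∃ m : ℤ, ∀ᶠ y in nhds x, f y = f x + (n : ℝ) ^ m * (y - x)) :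
    ∀ t : ℝ, 0 ≤ t → IsNAdic n t → f t - t ∈ SAdic n := by
  classical
  suffices H : ∀ N : ℕ, ∀ t : ℝ, 0 ≤ t → IsNAdic n t →
      (B.filter (fun b => b ∈ Set.Ioo 0 t)).card ≤ N → f t - t ∈ SAdic n by
    intro t ht htA
    exact H _ t ht htA le_rfl
  intro N
  induction N with
  | zero =>
    intro t ht htA hcard
    rcases eq_or_lt_of_le ht with h0 | h0
    · have : f 0 = 0 := hbdry 0 (Or.inl le_rfl)
      rw [← h0, this]
      simpa using SAdic_zero n
    · have hnb : ∀ x ∈ Set.Ioo 0 t, x ∉ B := by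
        intro x hx hxB
        have hmem : x ∈ B.filter (fun b => b ∈ Set.Ioo 0 t) := Finset.mem_filter.mpr ⟨hxB, hx⟩
        have : (B.filter (fun b => b ∈ Set.Ioo 0 t)) = ∅ :=
          Finset.card_eq_zero.mp (Nat.le_zero.mp hcard)
        exact Finset.eq_empty_iff_forall_notMem.mp this _ hmem
      obtain ⟨m, hm⟩ := affine_between n hn f hc 0 t h0 (fun x hx => hB x (hnb x hx))
      have hf0 : f 0 = 0 := hbdry 0 (Or.inl le_rfl)
      rw [hf0] at hm
      have h2 : f t - t = ((n : ℝ) ^ m - 1) * t := by rw [hm]; ring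
      rw [h2]
      exact SAdic_zpow_sub_one_mul hn m htA
  | succ N ih =>
    intro t ht htA hcard
    by_cases hF : (B.filter (fun b => b ∈ Set.Ioo 0 t)).card ≤ N
    · exact ih t ht htA hF
    · have hFne : (B.filter (fun b => b ∈ Set.Ioo 0 t)).Nonempty :=
        Finset.card_pos.mp (by omega)
      set u := (B.filter (fun b => b ∈ Set.Ioo 0 t)).max' hFne with hudef
      have huF : u ∈ B.filter (fun b => b ∈ Set.Ioo 0 t) := Finset.max'_mem _ hFne
      have huB := Finset.mem_filter.mp huF
      have hu0 : 0 < u := huB.2.1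
      have hut : u < t := huB.2.2
      have huA : IsNAdic n u := hBadic u huB.1
      have hnb : ∀ x ∈ Set.Ioo u t, x ∉ B := by
        intro x hx hxB
        have hxF : x ∈ B.filter (fun b => b ∈ Set.Ioo 0 t) :=
          Finset.mem_filter.mpr ⟨hxB, ⟨lt_trans hu0 hx.1, hx.2⟩⟩
        have := Finset.le_max' _ x hxF
        rw [← hudef] at this
        linarith [hx.1]
      obtain ⟨m, hm⟩ := affine_between n hn f hc u t hut (fun x hx => hB x (hnb x hx))
      have hcard' : (B.filter (fun b => b ∈ Set.Ioo 0 u)).card ≤ N := by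
        have hsub : B.filter (fun b => b ∈ Set.Ioo 0 u) ⊆
            (B.filter (fun b => b ∈ Set.Ioo 0 t)).erase u := by
          intro x hx
          obtain ⟨hxB, hx0, hxu⟩ := Finset.mem_filter.mp hx
          refine Finset.mem_erase.mpr ⟨ne_of_lt hxu, ?_⟩
          exact Finset.mem_filter.mpr ⟨hxB, ⟨hx0, lt_trans hxu hut⟩⟩
        have h1 := Finset.card_le_card hsub
        have h2 := Finset.card_erase_of_mem huF
        omega
      have hSu : f u - u ∈ SAdic n := ih u hu0.le huA hcard'
      have h3 : f t - t = (f u - u) + ((n : ℝ) ^ m - 1) * (t - u) := by rw [hm]; ring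
      rw [h3]
      exact SAdic_add hn hSu (SAdic_zpow_sub_one_mul hn m (htA.sub' huA hn))

/-- if `x = a/n^k ∈ (0,1)` is in lowest `n`-adic terms, `f ∈ F_n`
and `f x = b/n^ℓ`, then the base-`n` digit sums of `a` and `b` are congruent
modulo `n-1`; equivalently `a ≡ b (mod n-1)` is an orbit invariant. -/
theorem Fn_orbit_digit_sum_invariant (n a k b l : ℕ) (hn : 2 ≤ n)
    (hlow : ¬ n ∣ a)
    (hx0 : 0 < (a : ℝ) / n ^ k) (hx1 : (a : ℝ) / n ^ k < 1)
    (f : ℝ → ℝ) (hf : IsThompsonFn n f)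
    (hfx : f ((a : ℝ) / n ^ k) = (b : ℝ) / n ^ l) :
    (Nat.digits n a).sum ≡ (Nat.digits n b).sum [MOD (n - 1)] ∧
      a ≡ b [MOD (n - 1)] := by
  obtain ⟨hmono, hc, hbdry, B, hBadic, hB⟩ := hf
  have hnR : (n : ℝ) ≠ 0 := by positivity
  have hxA : IsNAdic n ((a : ℝ) / n ^ k) := ⟨(a : ℤ), k, by push_cast; ring⟩
  obtain ⟨p, j, hpj, hdvd⟩ := Fn_S n hn f hc hbdry B hBadic hB _ hx0.le hxA
  rw [hfx] at hpj
  -- hpj : (b:ℝ)/n^l - (a:ℝ)/n^k = p/n^j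
  have E : (b : ℝ) * (n : ℝ) ^ (k + j) = (a : ℝ) * (n : ℝ) ^ (l + j) + (p : ℝ) * (n : ℝ) ^ (k + l) := by
    rw [div_sub_div _ _ (pow_ne_zero l hnR) (pow_ne_zero k hnR),
      div_eq_div_iff (mul_ne_zero (pow_ne_zero l hnR) (pow_ne_zero k hnR))
        (pow_ne_zero j hnR)] at hpj
    rw [pow_add, pow_add, pow_add]
    linear_combination hpj
  have Ez : (b : ℤ) * (n : ℤ) ^ (k + j) = (a : ℤ) * (n : ℤ) ^ (l + j) + p * (n : ℤ) ^ (k + l) := by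
    exact_mod_cast E
  set d : ℤ := (n : ℤ) - 1 with hddef
  have hd : ∀ e : ℕ, (n : ℤ) ^ e ≡ 1 [ZMOD d] := by
    intro e
    have hdd : d ∣ (n : ℤ) ^ e - 1 := by simpa using sub_dvd_pow_sub_pow (n : ℤ) 1 e
    refine Int.modEq_iff_dvd.mpr ?_
    rw [show (1 : ℤ) - (n : ℤ) ^ e = -((n : ℤ) ^ e - 1) by ring]
    exact dvd_neg.mpr hdd
  have hba : (b : ℤ) ≡ (a : ℤ) [ZMOD d] := by
    calc (b : ℤ) ≡ (b : ℤ) * (n : ℤ) ^ (k + j) [ZMOD d] := by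
          simpa using ((hd (k + j)).mul_left (b : ℤ)).symm
      _ = (a : ℤ) * (n : ℤ) ^ (l + j) + p * (n : ℤ) ^ (k + l) := Ez
      _ ≡ (a : ℤ) * 1 + 0 * 1 [ZMOD d] :=
          Int.ModEq.add ((hd _).mul_left _)
            (Int.ModEq.mul (Int.modEq_zero_iff_dvd.mpr hdvd) (hd _))
      _ = (a : ℤ) := by ring
  have hcast : ((n - 1 : ℕ) : ℤ) = d := by
    rw [hddef]
    push_cast [Nat.cast_sub (by omega : 1 ≤ n)]
    ring
  have hmodN : a ≡ b [MOD n - 1] := by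
    refine Nat.modEq_iff_dvd.mpr ?_
    rw [hcast]
    exact hba.symm.dvd
  refine ⟨?_, hmodN⟩
  rcases eq_or_lt_of_le hn with h2 | h3
  · rw [show n - 1 = 1 by omega]
    exact Nat.modEq_one
  · have hmod1 : n % (n - 1) = 1 := by
      have h5 : (n - 1 + 1) % (n - 1) = 1 % (n - 1) := Nat.add_mod_left _ _
      rw [Nat.mod_eq_of_lt (by omega : 1 < n - 1)] at h5
      calc n % (n - 1) = (n - 1 + 1) % (n - 1) := by congr 1; omega
        _ = 1 := h5
    exact (Nat.modEq_digits_sum (n - 1) n hmod1 a).symm.trans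
      (hmodN.trans (Nat.modEq_digits_sum (n - 1) n hmod1 b))
end

section
/- Moreover, in the orbit statement for F_n, the element f with f(a/n^k) = b/n^ℓ (when a ≡ b mod n−1) can be chosen with word length at most C(k + ℓ) with respect to any fixed finite generating set of F_n, where C depends only on n and the generating set. -/
/-- `w` is a word in the alphabet `S ∪ S⁻¹`. -/
def WordIn (S : Finset (ℝ → ℝ)) (w : List (ℝ → ℝ)) : Prop :=
  ∀ g ∈ w, g ∈ S ∨ ∃ h ∈ S, g ∘ h = id ∧ h ∘ g = id

/-- The element (composition) represented by a word. -/
def wprod (w : List (ℝ → ℝ)) : ℝ → ℝ := w.foldr (· ∘ ·) id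

namespace FnAux

variable {n : ℕ}

lemma nadic_ratio (a : ℤ) (b : ℕ) : IsNAdic n ((a : ℝ) / (n:ℝ) ^ b) := ⟨a, b, rfl⟩

lemma nadic_int (a : ℤ) : IsNAdic n (a : ℝ) := ⟨a, 0, by simp⟩

lemma nadic_add (hn : (n:ℝ) ≠ 0) {x y : ℝ} (hx : IsNAdic n x) (hy : IsNAdic n y) :
    IsNAdic n (x + y) := by
  obtain ⟨a1, b1, rfl⟩ := hx
  obtain ⟨a2, b2, rfl⟩ := hy
  refine ⟨a1 * n ^ b2 + a2 * n ^ b1, b1 + b2, ?_⟩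
  have h1 : ((n:ℝ)) ^ b1 ≠ 0 := pow_ne_zero _ hn
  have h2 : ((n:ℝ)) ^ b2 ≠ 0 := pow_ne_zero _ hn
  rw [div_add_div _ _ h1 h2, pow_add]
  push_cast
  ring

lemma nadic_neg {x : ℝ} (hx : IsNAdic n x) : IsNAdic n (-x) := by
  obtain ⟨a, b, rfl⟩ := hx
  exact ⟨-a, b, by push_cast; ring⟩

lemma nadic_sub (hn : (n:ℝ) ≠ 0) {x y : ℝ} (hx : IsNAdic n x) (hy : IsNAdic n y) :
    IsNAdic n (x - y) := by
  rw [sub_eq_add_neg]; exact nadic_add hn hx (nadic_neg hy)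

lemma nadic_mulN {x : ℝ} (hn : (n:ℝ) ≠ 0) (hx : IsNAdic n x) : IsNAdic n ((n:ℝ) * x) := by
  obtain ⟨a, b, rfl⟩ := hx
  cases b with
  | zero => exact ⟨n * a, 0, by push_cast; simp⟩
  | succ b =>
    refine ⟨a, b, ?_⟩
    rw [pow_succ]
    field_simp

lemma nadic_divN {x : ℝ} (hx : IsNAdic n x) : IsNAdic n (x / (n:ℝ)) := by
  obtain ⟨a, b, rfl⟩ := hx
  exact ⟨a, b + 1, by rw [pow_succ, div_div]⟩

lemma nadic_mul_int {x : ℝ} (hn : (n:ℝ) ≠ 0) (c : ℤ) (hx : IsNAdic n x) :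
    IsNAdic n ((c:ℝ) * x) := by
  obtain ⟨a, b, rfl⟩ := hx
  exact ⟨c * a, b, by push_cast; ring⟩



noncomputable def phi (n : ℕ) (u l : ℝ) : ℝ → ℝ := fun t =>
  if t ≤ u then t
  else if t ≤ u + l then u + n * (t - u)
  else if t ≤ u + (n + 1) * l then u + n * l + (t - u - l) / n
  else t

noncomputable def psi (n : ℕ) (u l : ℝ) : ℝ → ℝ := fun t =>
  if t ≤ u then t
  else if t ≤ u + n * l then u + (t - u) / n
  else if t ≤ u + (n + 1) * l then u + l + n * (t - u - n * l)
  else t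

variable {n : ℕ} {u l : ℝ}

lemma phi_eval_low {t : ℝ} (h : t ≤ u) : phi n u l t = t := if_pos h

lemma phi_eval_mid (h1 : u < t) (h2 : t ≤ u + l) : phi n u l t = u + n * (t - u) := by
  unfold phi; rw [if_neg (not_le.mpr h1), if_pos h2]

lemma phi_eval_high (h1 : u + l < t) (h2 : t ≤ u + (n + 1) * l) :
    phi n u l t = u + n * l + (t - u - l) / n := by
  have hl : 0 ≤ l := by nlinarith [h1.le.trans h2, (by positivity : (0:ℝ) ≤ (n:ℝ))]
  unfold phi
  rw [if_neg (not_le.mpr (by linarith)), if_neg (not_le.mpr h1), if_pos h2]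

lemma phi_eval_top {t : ℝ} (hl : 0 ≤ l) (h : u + (n + 1) * l < t) : phi n u l t = t := by
  have h0 : (0:ℝ) ≤ (n:ℝ) := by positivity
  unfold phi
  rw [if_neg (not_le.mpr (by nlinarith)), if_neg (not_le.mpr (by nlinarith)),
    if_neg (not_le.mpr h)]

lemma psi_eval_low {t : ℝ} (h : t ≤ u) : psi n u l t = t := if_pos h

lemma psi_eval_mid (h1 : u < t) (h2 : t ≤ u + n * l) : psi n u l t = u + (t - u) / n := by
  unfold psi; rw [if_neg (not_le.mpr h1), if_pos h2]

lemma psi_eval_top {t : ℝ} (hl : 0 ≤ l) (h : u + (n + 1) * l < t) : psi n u l t = t := by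
  have h0 : (0:ℝ) ≤ (n:ℝ) := by positivity
  unfold psi
  rw [if_neg (not_le.mpr (by nlinarith)), if_neg (not_le.mpr (by nlinarith)),
    if_neg (not_le.mpr h)]

lemma psi_eval_high (h1 : u + n * l < t) (h2 : t ≤ u + (n + 1) * l) :
    psi n u l t = u + l + n * (t - u - n * l) := by
  have hl : 0 ≤ l := by nlinarith [h1.le.trans h2]
  have h0 : (0:ℝ) ≤ (n:ℝ) := by positivity
  unfold psi
  rw [if_neg (not_le.mpr (by nlinarith)), if_neg (not_le.mpr h1), if_pos h2]

section Props

variable (hn : 2 ≤ n) (hu : 0 ≤ u) (hl : 0 < l) (hb : u + (n + 1) * l ≤ 1)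

include hn hl

lemma phi_mono : StrictMono (phi n u l) := by
  have h1 : (1:ℝ) ≤ (n:ℝ) := by exact_mod_cast Nat.one_le_of_lt hn
  have h0 : (0:ℝ) < (n:ℝ) := by linarith
  intro s t hst
  rcases le_or_gt s u with hs1 | hs1
  · rw [phi_eval_low hs1]
    rcases le_or_gt t u with ht1 | ht1
    · rw [phi_eval_low ht1]; exact hst
    · rcases le_or_gt t (u + l) with ht2 | ht2
      · rw [phi_eval_mid ht1 ht2]; nlinarith
      · rcases le_or_gt t (u + (n + 1) * l) with ht3 | ht3
        · rw [phi_eval_high ht2 ht3]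
          have : 0 < (t - u - l) / n := div_pos (by linarith) h0
          nlinarith
        · rw [phi_eval_top hl.le ht3]; exact hst
  · rcases le_or_gt s (u + l) with hs2 | hs2
    · rw [phi_eval_mid hs1 hs2]
      have ht1 : u < t := hs1.trans hst
      rcases le_or_gt t (u + l) with ht2 | ht2
      · rw [phi_eval_mid ht1 ht2]; nlinarith
      · rcases le_or_gt t (u + (n + 1) * l) with ht3 | ht3
        · rw [phi_eval_high ht2 ht3]
          have h4 : 0 < (t - u - l) / n := div_pos (by linarith) h0
          nlinarith
        · rw [phi_eval_top hl.le ht3]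
          nlinarith
    · rcases le_or_gt s (u + (n + 1) * l) with hs3 | hs3
      · rw [phi_eval_high hs2 hs3]
        have ht2 : u + l < t := hs2.trans hst
        rcases le_or_gt t (u + (n + 1) * l) with ht3 | ht3
        · rw [phi_eval_high ht2 ht3]
          have h4 : 0 < (t - s) / n := div_pos (by linarith) h0
          have h5 : (t - u - l) / n - (s - u - l) / n = (t - s) / n := by ring
          linarith
        · rw [phi_eval_top hl.le ht3]
          have h5 : (s - u - l) / n ≤ l := by rw [div_le_iff₀ h0]; nlinarith
          nlinarith
      · rw [phi_eval_top hl.le hs3, phi_eval_top hl.le (hs3.trans hst)]; exact hst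

lemma psi_mono : StrictMono (psi n u l) := by
  have h1 : (1:ℝ) ≤ (n:ℝ) := by exact_mod_cast Nat.one_le_of_lt hn
  have h0 : (0:ℝ) < (n:ℝ) := by linarith
  intro s t hst
  rcases le_or_gt s u with hs1 | hs1
  · rw [psi_eval_low hs1]
    rcases le_or_gt t u with ht1 | ht1
    · rw [psi_eval_low ht1]; exact hst
    · rcases le_or_gt t (u + n * l) with ht2 | ht2
      · rw [psi_eval_mid ht1 ht2]
        have : 0 < (t - u) / n := div_pos (by linarith) h0
        linarith
      · rcases le_or_gt t (u + (n + 1) * l) with ht3 | ht3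
        · rw [psi_eval_high ht2 ht3]; nlinarith
        · rw [psi_eval_top hl.le ht3]; exact hst
  · rcases le_or_gt s (u + n * l) with hs2 | hs2
    · rw [psi_eval_mid hs1 hs2]
      have ht1 : u < t := hs1.trans hst
      have hdl : (s - u) / n ≤ l := by rw [div_le_iff₀ h0]; nlinarith
      rcases le_or_gt t (u + n * l) with ht2 | ht2
      · rw [psi_eval_mid ht1 ht2]
        have h4 : 0 < (t - s) / n := div_pos (by linarith) h0
        have h5 : (t - u) / n - (s - u) / n = (t - s) / n := by ring
        linarith
      · rcases le_or_gt t (u + (n + 1) * l) with ht3 | ht3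
        · rw [psi_eval_high ht2 ht3]; nlinarith
        · rw [psi_eval_top hl.le ht3]; nlinarith
    · rcases le_or_gt s (u + (n + 1) * l) with hs3 | hs3
      · rw [psi_eval_high hs2 hs3]
        have ht3 : u + n * l < t := hs2.trans hst
        rcases le_or_gt t (u + (n + 1) * l) with ht4 | ht4
        · rw [psi_eval_high ht3 ht4]; nlinarith
        · rw [psi_eval_top hl.le ht4]; nlinarith
      · rw [psi_eval_top hl.le hs3, psi_eval_top hl.le (hs3.trans hst)]; exact hst


omit hn hl in
lemma phi_cont (hn : 2 ≤ n) (hl : 0 ≤ l) : Continuous (phi n u l) := by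
  have h0 : (0:ℝ) < (n:ℝ) := by exact_mod_cast Nat.lt_of_lt_of_le Nat.zero_lt_two hn
  unfold phi
  apply Continuous.if_le continuous_id _ continuous_id continuous_const
  · intro a ha
    simp only [id_eq] at ha
    rw [ha]
    rw [if_pos (by nlinarith : u ≤ u + l)]
    simp only [id_eq]
    ring
  · apply Continuous.if_le (by continuity) _ continuous_id continuous_const
    · intro a ha
      simp only [id_eq] at ha
      rw [ha]
      rw [if_pos (by nlinarith : u + l ≤ u + (↑n + 1) * l)]
      field_simp
      ring
    · apply Continuous.if_le (by continuity) continuous_id continuous_id continuous_const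
      intro a ha
      simp only [id_eq] at ha
      rw [ha]
      simp only [id_eq]
      field_simp
      ring

omit hn hl in
lemma psi_cont (hn : 2 ≤ n) (hl : 0 ≤ l) : Continuous (psi n u l) := by
  have h0 : (0:ℝ) < (n:ℝ) := by exact_mod_cast Nat.lt_of_lt_of_le Nat.zero_lt_two hn
  unfold psi
  apply Continuous.if_le continuous_id _ continuous_id continuous_const
  · intro a ha
    simp only [id_eq] at ha
    rw [ha]
    rw [if_pos (by nlinarith : u ≤ u + ↑n * l)]
    simp only [id_eq]
    ring
  · apply Continuous.if_le (by continuity) _ continuous_id continuous_const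
    · intro a ha
      simp only [id_eq] at ha
      rw [ha]
      rw [if_pos (by nlinarith : u + ↑n * l ≤ u + (↑n + 1) * l)]
      field_simp
      ring
    · apply Continuous.if_le (by continuity) continuous_id continuous_id continuous_const
      intro a ha
      simp only [id_eq] at ha
      rw [ha]
      simp only [id_eq]
      ring

include hu hb

lemma phi_boundary : ∀ x : ℝ, x ≤ 0 ∨ 1 ≤ x → phi n u l x = x := by
  have h1 : (1:ℝ) ≤ (n:ℝ) := by exact_mod_cast Nat.one_le_of_lt hn
  intro x hx
  rcases hx with hx | hx
  · exact phi_eval_low (by linarith)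
  · rcases le_or_gt x (u + (n+1)*l) with h | h
    · have hxe : x = u + (n+1)*l := le_antisymm h (by linarith)
      have h2 : u + l < x := by nlinarith
      rw [phi_eval_high h2 h, hxe]
      field_simp
      ring
    · exact phi_eval_top hl.le h

lemma psi_boundary : ∀ x : ℝ, x ≤ 0 ∨ 1 ≤ x → psi n u l x = x := by
  have h1 : (1:ℝ) ≤ (n:ℝ) := by exact_mod_cast Nat.one_le_of_lt hn
  intro x hx
  rcases hx with hx | hx
  · exact psi_eval_low (by linarith)
  · rcases le_or_gt x (u + (n+1)*l) with h | h
    · have hxe : x = u + (n+1)*l := le_antisymm h (by linarith)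
      have h2 : u + n * l < x := by nlinarith
      rw [psi_eval_high h2 h, hxe]
      field_simp
      ring
    · exact psi_eval_top hl.le h

omit hu hb

lemma phi_affine : ∀ x : ℝ, x ∉ ({u, u + l, u + (n+1) * l} : Finset ℝ) →
    ∃ m : ℤ, ∀ᶠ y in nhds x, phi n u l y = phi n u l x + (n : ℝ) ^ m * (y - x) := by
  have h1 : (1:ℝ) ≤ (n:ℝ) := by exact_mod_cast Nat.one_le_of_lt hn
  have h0 : (0:ℝ) < (n:ℝ) := by linarith
  intro x hx
  simp only [Finset.mem_insert, Finset.mem_singleton, not_or] at hx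
  obtain ⟨hx1, hx2, hx3⟩ := hx
  rcases lt_trichotomy x u with h | h | h
  · refine ⟨0, ?_⟩
    filter_upwards [Iio_mem_nhds h] with y (hy : y < u)
    rw [phi_eval_low hy.le, phi_eval_low h.le, zpow_zero]
    ring
  · exact absurd h hx1
  rcases lt_trichotomy x (u + l) with h2 | h2 | h2
  · refine ⟨1, ?_⟩
    filter_upwards [Ioo_mem_nhds h h2] with y hy
    rw [phi_eval_mid hy.1 hy.2.le, phi_eval_mid h h2.le, zpow_one]
    ring
  · exact absurd h2 hx2
  rcases lt_trichotomy x (u + (n+1) * l) with h3 | h3 | h3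
  · refine ⟨-1, ?_⟩
    filter_upwards [Ioo_mem_nhds h2 h3] with y hy
    rw [phi_eval_high hy.1 hy.2.le, phi_eval_high h2 h3.le, zpow_neg_one]
    field_simp
    ring
  · exact absurd h3 hx3
  · refine ⟨0, ?_⟩
    have hl' : 0 ≤ l := by nlinarith
    filter_upwards [Ioi_mem_nhds h3] with y (hy : u + (n+1) * l < y)
    rw [phi_eval_top hl' hy, phi_eval_top hl' h3, zpow_zero]
    ring

lemma psi_affine : ∀ x : ℝ, x ∉ ({u, u + n * l, u + (n+1) * l} : Finset ℝ) →
    ∃ m : ℤ, ∀ᶠ y in nhds x, psi n u l y = psi n u l x + (n : ℝ) ^ m * (y - x) := by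
  have h1 : (1:ℝ) ≤ (n:ℝ) := by exact_mod_cast Nat.one_le_of_lt hn
  have h0 : (0:ℝ) < (n:ℝ) := by linarith
  intro x hx
  simp only [Finset.mem_insert, Finset.mem_singleton, not_or] at hx
  obtain ⟨hx1, hx2, hx3⟩ := hx
  rcases lt_trichotomy x u with h | h | h
  · refine ⟨0, ?_⟩
    filter_upwards [Iio_mem_nhds h] with y (hy : y < u)
    rw [psi_eval_low hy.le, psi_eval_low h.le, zpow_zero]
    ring
  · exact absurd h hx1
  rcases lt_trichotomy x (u + n * l) with h2 | h2 | h2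
  · refine ⟨-1, ?_⟩
    filter_upwards [Ioo_mem_nhds h h2] with y hy
    rw [psi_eval_mid hy.1 hy.2.le, psi_eval_mid h h2.le, zpow_neg_one]
    field_simp
    ring
  · exact absurd h2 hx2
  rcases lt_trichotomy x (u + (n+1) * l) with h3 | h3 | h3
  · refine ⟨1, ?_⟩
    filter_upwards [Ioo_mem_nhds h2 h3] with y hy
    rw [psi_eval_high hy.1 hy.2.le, psi_eval_high h2 h3.le, zpow_one]
    ring
  · exact absurd h3 hx3
  · refine ⟨0, ?_⟩
    have hl' : 0 ≤ l := by nlinarith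
    filter_upwards [Ioi_mem_nhds h3] with y (hy : u + (n+1) * l < y)
    rw [psi_eval_top hl' hy, psi_eval_top hl' h3, zpow_zero]
    ring

lemma phi_nadic (hau : IsNAdic n u) (hal : IsNAdic n l) (x : ℝ) :
    (IsNAdic n x ↔ IsNAdic n (phi n u l x)) := by
  have h1 : (1:ℝ) ≤ (n:ℝ) := by exact_mod_cast Nat.one_le_of_lt hn
  have h0 : (0:ℝ) < (n:ℝ) := by linarith
  have hne : (n:ℝ) ≠ 0 := ne_of_gt h0
  constructor
  · intro hx
    rcases le_or_gt x u with h | h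
    · rwa [phi_eval_low h]
    rcases le_or_gt x (u + l) with h2 | h2
    · rw [phi_eval_mid h h2]
      exact nadic_add hne hau (nadic_mulN hne (nadic_sub hne hx hau))
    rcases le_or_gt x (u + (n+1) * l) with h3 | h3
    · rw [phi_eval_high h2 h3]
      exact nadic_add hne (nadic_add hne hau (nadic_mulN hne hal))
        (nadic_divN (nadic_sub hne (nadic_sub hne hx hau) hal))
    · rwa [phi_eval_top hl.le h3]
  · intro hx
    rcases le_or_gt x u with h | h
    · rwa [phi_eval_low h] at hx
    rcases le_or_gt x (u + l) with h2 | h2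
    · rw [phi_eval_mid h h2] at hx
      have : x = u + ((u + n * (x - u)) - u) / n := by field_simp; ring
      rw [this]
      exact nadic_add hne hau (nadic_divN (nadic_sub hne hx hau))
    rcases le_or_gt x (u + (n+1) * l) with h3 | h3
    · rw [phi_eval_high h2 h3] at hx
      have : x = u + l + n * ((u + n * l + (x - u - l) / n) - u - n * l) := by
        field_simp
        ring
      rw [this]
      exact nadic_add hne (nadic_add hne hau hal)
        (nadic_mulN hne (nadic_sub hne (nadic_sub hne hx hau) (nadic_mulN hne hal)))
    · rwa [phi_eval_top hl.le h3] at hx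

lemma psi_nadic (hau : IsNAdic n u) (hal : IsNAdic n l) (x : ℝ) :
    (IsNAdic n x ↔ IsNAdic n (psi n u l x)) := by
  have h1 : (1:ℝ) ≤ (n:ℝ) := by exact_mod_cast Nat.one_le_of_lt hn
  have h0 : (0:ℝ) < (n:ℝ) := by linarith
  have hne : (n:ℝ) ≠ 0 := ne_of_gt h0
  constructor
  · intro hx
    rcases le_or_gt x u with h | h
    · rwa [psi_eval_low h]
    rcases le_or_gt x (u + n * l) with h2 | h2
    · rw [psi_eval_mid h h2]
      exact nadic_add hne hau (nadic_divN (nadic_sub hne hx hau))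
    rcases le_or_gt x (u + (n+1) * l) with h3 | h3
    · rw [psi_eval_high h2 h3]
      exact nadic_add hne (nadic_add hne hau hal)
        (nadic_mulN hne (nadic_sub hne (nadic_sub hne hx hau) (nadic_mulN hne hal)))
    · rwa [psi_eval_top hl.le h3]
  · intro hx
    rcases le_or_gt x u with h | h
    · rwa [psi_eval_low h] at hx
    rcases le_or_gt x (u + n * l) with h2 | h2
    · rw [psi_eval_mid h h2] at hx
      have : x = u + n * ((u + (x - u) / n) - u) := by
        field_simp
        ring
      rw [this]
      exact nadic_add hne hau (nadic_mulN hne (nadic_sub hne hx hau))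
    rcases le_or_gt x (u + (n+1) * l) with h3 | h3
    · rw [psi_eval_high h2 h3] at hx
      have : x = u + n * l + ((u + l + n * (x - u - n * l)) - u - l) / n := by
        field_simp
        ring
      rw [this]
      exact nadic_add hne (nadic_add hne hau (nadic_mulN hne hal))
        (nadic_divN (nadic_sub hne (nadic_sub hne hx hau) hal))
    · rwa [psi_eval_top hl.le h3] at hx


end Props

/-- The combined niceness predicate. -/
def NiceFn (n : ℕ) (f : ℝ → ℝ) : Prop :=
  IsThompsonFn n f ∧ ∀ x, IsNAdic n x ↔ IsNAdic n (f x)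

lemma phi_nice (hn : 2 ≤ n) (hu : 0 ≤ u) (hl : 0 < l) (hb : u + (n + 1) * l ≤ 1)
    (hau : IsNAdic n u) (hal : IsNAdic n l) : NiceFn n (phi n u l) := by
  have h0 : (0:ℝ) < (n:ℝ) := by
    have : (0:ℕ) < n := by omega
    exact_mod_cast this
  have hne : (n:ℝ) ≠ 0 := ne_of_gt h0
  refine ⟨⟨phi_mono hn hl, phi_cont hn hl.le, phi_boundary hn hu hl hb,
    {u, u + l, u + (n+1) * l}, ?_, phi_affine hn hl⟩, phi_nadic hn hl hau hal⟩
  intro b hbmem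
  simp only [Finset.mem_insert, Finset.mem_singleton] at hbmem
  rcases hbmem with rfl | rfl | rfl
  · exact hau
  · exact nadic_add hne hau hal
  · have h3 : u + ((n:ℝ)+1)*l = (u + l) + (n:ℝ)*l := by ring
    rw [h3]
    exact nadic_add hne (nadic_add hne hau hal) (nadic_mulN hne hal)

lemma psi_nice (hn : 2 ≤ n) (hu : 0 ≤ u) (hl : 0 < l) (hb : u + (n + 1) * l ≤ 1)
    (hau : IsNAdic n u) (hal : IsNAdic n l) : NiceFn n (psi n u l) := by
  have h0 : (0:ℝ) < (n:ℝ) := by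
    have : (0:ℕ) < n := by omega
    exact_mod_cast this
  have hne : (n:ℝ) ≠ 0 := ne_of_gt h0
  refine ⟨⟨psi_mono hn hl, psi_cont hn hl.le, psi_boundary hn hu hl hb,
    {u, u + (n:ℝ) * l, u + (n+1) * l}, ?_, psi_affine hn hl⟩, psi_nadic hn hl hau hal⟩
  intro b hbmem
  simp only [Finset.mem_insert, Finset.mem_singleton] at hbmem
  rcases hbmem with rfl | rfl | rfl
  · exact hau
  · exact nadic_add hne hau (nadic_mulN hne hal)
  · have h3 : u + ((n:ℝ)+1)*l = (u + l) + (n:ℝ)*l := by ring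
    rw [h3]
    exact nadic_add hne (nadic_add hne hau hal) (nadic_mulN hne hal)

lemma nice_id : NiceFn n id := by
  refine ⟨⟨strictMono_id, continuous_id, fun _ _ => rfl, ∅, by simp, ?_⟩, fun x => Iff.rfl⟩
  intro x _
  refine ⟨0, Filter.Eventually.of_forall fun y => ?_⟩
  simp

lemma nice_comp {g h : ℝ → ℝ} (hne : (n:ℝ) ≠ 0) (hg : NiceFn n g) (hh : NiceFn n h) :
    NiceFn n (g ∘ h) := by
  classical
  obtain ⟨⟨gm, gc, gb, Bg, hBg, hga⟩, gnad⟩ := hg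
  obtain ⟨⟨hm, hc, hb, Bh, hBh, hha⟩, hnad⟩ := hh
  refine ⟨⟨gm.comp hm, gc.comp hc, ?_,
    Bh ∪ Bg.preimage h hm.injective.injOn, ?_, ?_⟩,
    fun x => (hnad x).trans (gnad (h x))⟩
  · intro x hx
    simp only [Function.comp_apply]
    rw [hb x hx, gb x hx]
  · intro b hbmem
    rcases Finset.mem_union.mp hbmem with hmem | hmem
    · exact hBh b hmem
    · exact (hnad b).mpr (hBg (h b) (Finset.mem_preimage.mp hmem))
  · intro x hx
    rw [Finset.mem_union] at hx
    push_neg at hx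
    obtain ⟨hx1, hx2⟩ := hx
    have hx2' : h x ∉ Bg := fun hc' => hx2 (Finset.mem_preimage.mpr hc')
    obtain ⟨m1, hm1⟩ := hha x hx1
    obtain ⟨m2, hm2⟩ := hga (h x) hx2'
    refine ⟨m2 + m1, ?_⟩
    have hcont : Filter.Tendsto h (nhds x) (nhds (h x)) := hc.continuousAt
    filter_upwards [hm1, hcont.eventually hm2] with y h1 h2
    simp only [Function.comp_apply]
    rw [h2, h1, zpow_add₀ hne]
    ring

/-- Apply a list of maps in order (head first). -/
def compList (G : List (ℝ → ℝ)) : ℝ → ℝ := G.foldr (fun g f => f ∘ g) id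

@[simp] lemma compList_nil : compList [] = id := rfl

@[simp] lemma compList_cons (g : ℝ → ℝ) (G : List (ℝ → ℝ)) :
    compList (g :: G) = compList G ∘ g := rfl

lemma compList_append (G₁ G₂ : List (ℝ → ℝ)) :
    compList (G₁ ++ G₂) = compList G₂ ∘ compList G₁ := by
  induction G₁ with
  | nil => simp
  | cons g G ih =>
      simp only [List.cons_append, compList_cons, ih]
      rfl

lemma nice_compList (hne : (n:ℝ) ≠ 0) {G : List (ℝ → ℝ)} (hG : ∀ g ∈ G, NiceFn n g) :
    NiceFn n (compList G) := by
  induction G with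
  | nil => exact nice_id
  | cons g G ih =>
      rw [compList_cons]
      exact nice_comp hne (ih fun g' hg' => hG g' (List.mem_cons_of_mem _ hg'))
        (hG g (List.mem_cons_self))

lemma wprod_append (v w : List (ℝ → ℝ)) : wprod (v ++ w) = wprod v ∘ wprod w := by
  induction v with
  | nil => rfl
  | cons g v ih =>
      show wprod (g :: (v ++ w)) = _
      unfold wprod at *
      simp only [List.foldr_cons, ih]
      rfl

lemma wordIn_append {S : Finset (ℝ → ℝ)} {v w : List (ℝ → ℝ)}
    (hv : WordIn S v) (hw : WordIn S w) : WordIn S (v ++ w) := by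
  intro g hg
  rcases List.mem_append.mp hg with h | h
  · exact hv g h
  · exact hw g h

def bigWord (wo : (ℝ → ℝ) → List (ℝ → ℝ)) (G : List (ℝ → ℝ)) : List (ℝ → ℝ) :=
  G.foldr (fun g acc => acc ++ wo g) []

@[simp] lemma bigWord_nil (wo : (ℝ → ℝ) → List (ℝ → ℝ)) : bigWord wo [] = [] := rfl

@[simp] lemma bigWord_cons (wo : (ℝ → ℝ) → List (ℝ → ℝ)) (g : ℝ → ℝ) (G : List (ℝ → ℝ)) :
    bigWord wo (g :: G) = bigWord wo G ++ wo g := rfl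

lemma wprod_bigWord {wo : (ℝ → ℝ) → List (ℝ → ℝ)} {G : List (ℝ → ℝ)}
    (hw : ∀ g ∈ G, wprod (wo g) = g) : wprod (bigWord wo G) = compList G := by
  induction G with
  | nil => rfl
  | cons g G ih =>
      rw [bigWord_cons, wprod_append, ih (fun g' h => hw g' (List.mem_cons_of_mem _ h)),
        hw g (List.mem_cons_self), compList_cons]

lemma wordIn_bigWord {S : Finset (ℝ → ℝ)} {wo : (ℝ → ℝ) → List (ℝ → ℝ)} {G : List (ℝ → ℝ)}
    (hw : ∀ g ∈ G, WordIn S (wo g)) : WordIn S (bigWord wo G) := by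
  induction G with
  | nil => intro g hg; simp at hg
  | cons g G ih =>
      rw [bigWord_cons]
      exact wordIn_append (ih fun g' h => hw g' (List.mem_cons_of_mem _ h))
        (hw g (List.mem_cons_self))

lemma bigWord_length {wo : (ℝ → ℝ) → List (ℝ → ℝ)} {G : List (ℝ → ℝ)} {W : ℕ}
    (hw : ∀ g ∈ G, (wo g).length ≤ W) : (bigWord wo G).length ≤ G.length * W := by
  induction G with
  | nil => simp
  | cons g G ih =>
      rw [bigWord_cons, List.length_append, List.length_cons]
      have h1 := ih fun g' h => hw g' (List.mem_cons_of_mem _ h)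
      have h2 := hw g (List.mem_cons_self)
      calc (bigWord wo G).length + (wo g).length ≤ G.length * W + W := by omega
        _ = (G.length + 1) * W := by ring

noncomputable def TSet (n : ℕ) : Finset (ℝ → ℝ) :=
  letI := Classical.decEq (ℝ → ℝ)
  ((Finset.range (n^3+1)) ×ˢ (Finset.range (n^3+1))).image
      (fun p => phi n ((p.1 : ℝ) / (n:ℝ)^3) ((p.2 : ℝ) / (n:ℝ)^3)) ∪
  ((Finset.range (n^3+1)) ×ˢ (Finset.range (n^3+1))).image
      (fun p => psi n ((p.1 : ℝ) / (n:ℝ)^3) ((p.2 : ℝ) / (n:ℝ)^3))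

lemma phi_mem_TSet {p q : ℤ} (hp0 : 0 ≤ p) (hq0 : 0 ≤ q) (hp : p ≤ n^3) (hq : q ≤ n^3) :
    phi n ((p:ℝ) / (n:ℝ)^3) ((q:ℝ) / (n:ℝ)^3) ∈ TSet n := by
  classical
  unfold TSet
  apply Finset.mem_union_left
  apply Finset.mem_image.mpr
  have e1 : ((p.toNat : ℕ) : ℝ) = (p : ℝ) := by exact_mod_cast Int.toNat_of_nonneg hp0
  have e2 : ((q.toNat : ℕ) : ℝ) = (q : ℝ) := by exact_mod_cast Int.toNat_of_nonneg hq0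
  refine ⟨(p.toNat, q.toNat), ?_, ?_⟩
  · simp only [Finset.mem_product, Finset.mem_range, Nat.lt_succ_iff]
    constructor <;> · zify; omega
  · rw [e1, e2]
    
lemma psi_mem_TSet {p q : ℤ} (hp0 : 0 ≤ p) (hq0 : 0 ≤ q) (hp : p ≤ n^3) (hq : q ≤ n^3) :
    psi n ((p:ℝ) / (n:ℝ)^3) ((q:ℝ) / (n:ℝ)^3) ∈ TSet n := by
  classical
  unfold TSet
  apply Finset.mem_union_right
  apply Finset.mem_image.mpr
  have e1 : ((p.toNat : ℕ) : ℝ) = (p : ℝ) := by exact_mod_cast Int.toNat_of_nonneg hp0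
  have e2 : ((q.toNat : ℕ) : ℝ) = (q : ℝ) := by exact_mod_cast Int.toNat_of_nonneg hq0
  refine ⟨(p.toNat, q.toNat), ?_, ?_⟩
  · simp only [Finset.mem_product, Finset.mem_range, Nat.lt_succ_iff]
    constructor <;> · zify; omega
  · rw [e1, e2]


lemma cast_pow_eq (n : ℕ) (m : ℕ) : ((n:ℝ))^m = (((n:ℤ)^m : ℤ) : ℝ) := by push_cast; ring

set_option maxHeartbeats 2000000 in
lemma reduce (hn : 2 ≤ n) : ∀ m : ℕ, ∀ a : ℤ,
    0 < (a:ℝ) / (n:ℝ)^m → (a:ℝ) / (n:ℝ)^m < 1 →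
    ∃ c : ℤ, 1 ≤ c ∧ c ≤ (n:ℤ) - 1 ∧ ((n:ℤ) - 1) ∣ (a - c) ∧
    ∃ gs hs : List (ℝ → ℝ),
      gs.length ≤ m ∧ hs.length ≤ m ∧
      (∀ g ∈ gs, g ∈ TSet n ∧ NiceFn n g) ∧
      (∀ h ∈ hs, h ∈ TSet n ∧ NiceFn n h) ∧
      compList gs ((a:ℝ) / (n:ℝ)^m) = (c:ℝ) / (n:ℝ) ∧
      compList hs ((c:ℝ) / (n:ℝ)) = (a:ℝ) / (n:ℝ)^m := by
  have hν0 : (0:ℝ) < (n:ℝ) := by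
    have : (0:ℕ) < n := by omega
    exact_mod_cast this
  have hνne : (n:ℝ) ≠ 0 := ne_of_gt hν0
  have hν1 : (1:ℝ) ≤ (n:ℝ) := by
    have : (1:ℕ) ≤ n := by omega
    exact_mod_cast this
  have hnZ : (2:ℤ) ≤ (n:ℤ) := by exact_mod_cast hn
  intro m
  induction m using Nat.strong_induction_on with
  | _ m IH =>
  intro a hx0 hx1
  have hpm : (0:ℝ) < (n:ℝ)^m := by positivity
  have haR0 : (0:ℝ) < (a:ℝ) := by
    have := mul_pos hx0 hpm
    rwa [div_mul_cancel₀ _ (ne_of_gt hpm)] at this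
  have ha0 : 0 < a := by exact_mod_cast haR0
  have haRm : (a:ℝ) < (n:ℝ)^m := by
    have := mul_lt_mul_of_pos_right hx1 hpm
    rwa [div_mul_cancel₀ _ (ne_of_gt hpm), one_mul] at this
  have ham : a < (n:ℤ)^m := by
    rw [cast_pow_eq n m] at haRm
    exact_mod_cast haRm
  by_cases hdvd_na : (n:ℤ) ∣ a
  · -- reduce the representation
    obtain ⟨a', rfl⟩ := hdvd_na
    match m, ham, hx0, hx1, IH with
    | 0, ham, hx0, hx1, _ =>
        exfalso
        rw [pow_zero] at ham
        omega
    | (m'+1), ham, hx0, hx1, IH =>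
        have hx : (((n:ℤ) * a' : ℤ):ℝ) / (n:ℝ)^(m'+1) = (a':ℝ) / (n:ℝ)^m' := by
          rw [pow_succ]
          push_cast
          field_simp
        rw [hx] at hx0 hx1
        obtain ⟨c, hc1, hc2, hc3, gs, hs, hg1, hg2, hg3, hg4, hg5, hg6⟩ :=
          IH m' (by omega) a' hx0 hx1
        refine ⟨c, hc1, hc2, ?_, gs, hs, by omega, by omega, hg3, hg4, ?_, ?_⟩
        · have heq : (n:ℤ) * a' - c = ((n:ℤ) - 1) * a' + (a' - c) := by ring
          rw [heq]
          exact dvd_add ⟨a', rfl⟩ hc3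
        · rw [hx]; exact hg5
        · rw [hx]; exact hg6
  · -- n does not divide a
    match m, ham, hx0, hx1, IH with
    | 0, ham, hx0, hx1, _ =>
        exfalso
        rw [pow_zero] at ham
        omega
    | 1, ham, hx0, hx1, _ =>
        rw [pow_one] at ham
        refine ⟨a, ha0, by omega, by simp, [], [], by simp, by simp, by simp, by simp, ?_, ?_⟩
        · simp [pow_one]
        · simp [pow_one]
    | 2, ham, hx0, hx1, _ =>
        -- single finisher gadget
        have ha2 : a < (n:ℤ)^2 := ham
        obtain ⟨c, hc_def⟩ : ∃ c : ℤ, c = (a - 1) % ((n:ℤ) - 1) + 1 := ⟨_, rfl⟩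
        have hmod0 : 0 ≤ (a - 1) % ((n:ℤ) - 1) := Int.emod_nonneg _ (by omega)
        have hmodlt : (a - 1) % ((n:ℤ) - 1) < (n:ℤ) - 1 := Int.emod_lt_of_pos _ (by omega)
        have hc1 : 1 ≤ c := by omega
        have hc2 : c ≤ (n:ℤ) - 1 := by omega
        have hdvd : ((n:ℤ) - 1) ∣ (a - c) := by
          refine ⟨(a - 1) / ((n:ℤ) - 1), ?_⟩
          have h := Int.emod_def (a - 1) ((n:ℤ) - 1)
          linarith [h]
        obtain ⟨t, ht⟩ := hdvd
        have hdvd2 : ((n:ℤ) - 1) ∣ (c * n - a) := ⟨c - t, by linear_combination -ht⟩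
        have hac : c ≤ a := by
          rcases le_or_gt c a with h | h
          · exact h
          · exfalso
            rcases le_or_gt 0 t with h2 | h2
            · have h3 : 0 ≤ ((n:ℤ) - 1) * t := mul_nonneg (by omega) h2
              linarith
            · have h3 : t ≤ -1 := by omega
              have h4 : ((n:ℤ) - 1) * t ≤ ((n:ℤ) - 1) * (-1) :=
                mul_le_mul_of_nonneg_left h3 (by omega)
              linarith
        rcases lt_trichotomy a (c * n) with hlt | heq | hgt
        · -- phi finisher
          obtain ⟨i, hi⟩ := hdvd2
          have hi1 : 1 ≤ i := by
            by_contra h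
            have h2 : i ≤ 0 := by omega
            have h3 : ((n:ℤ) - 1) * i ≤ 0 := mul_nonpos_of_nonneg_of_nonpos (by omega) h2
            linarith
          have hia : 0 ≤ a - i := by
            have key : ((n:ℤ) - 1) * (a - i) = n * (a - c) := by linear_combination hi
            by_contra h
            have h2 : a - i ≤ -1 := by omega
            have h3 : ((n:ℤ) - 1) * (a - i) ≤ ((n:ℤ) - 1) * (-1) :=
              mul_le_mul_of_nonneg_left h2 (by omega)
            have h4 : 0 ≤ (n:ℤ) * (a - c) := mul_nonneg (by omega) (by omega)
            linarith
          have hsupp : a + n * i ≤ (n:ℤ)^2 := by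
            have key : ((n:ℤ) - 1) * (a + n * i) = c * (n:ℤ)^2 - a := by
              linear_combination -(n:ℤ) * hi
            have h5 : c * (n:ℤ)^2 ≤ ((n:ℤ) - 1) * (n:ℤ)^2 :=
              mul_le_mul_of_nonneg_right hc2 (by positivity)
            have h6 : ((n:ℤ)-1) * (a + n*i) < ((n:ℤ)-1) * (n:ℤ)^2 := by linarith
            have h7 : a + n*i < (n:ℤ)^2 := lt_of_mul_lt_mul_left h6 (by omega)
            linarith
          set u : ℝ := ((a - i : ℤ):ℝ) / (n:ℝ)^2 with hu_def
          set l : ℝ := ((i : ℤ):ℝ) / (n:ℝ)^2 with hl_def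
          have hu0 : 0 ≤ u := by
            apply div_nonneg _ (by positivity)
            exact_mod_cast hia
          have hl0 : 0 < l := by
            apply div_pos _ (by positivity)
            exact_mod_cast hi1
          have hsum : u + ((n:ℝ) + 1) * l = ((a + n * i : ℤ):ℝ) / (n:ℝ)^2 := by
            rw [hu_def, hl_def]; push_cast; ring
          have hb1 : u + ((n:ℝ) + 1) * l ≤ 1 := by
            rw [hsum, div_le_one (by positivity), cast_pow_eq n 2]
            exact_mod_cast hsupp
          have hxul : (a:ℝ) / (n:ℝ)^2 = u + l := by
            rw [hu_def, hl_def]; push_cast; ring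
          have hiR : ((n:ℝ) - 1) * (i:ℝ) = (c:ℝ) * (n:ℝ) - (a:ℝ) := by
            have h := congrArg (fun z : ℤ => (z:ℝ)) hi
            push_cast at h
            linarith
          have h9 : a + ((n:ℤ)-1) * i = c * n := by linarith
          have h9R : (a:ℝ) + ((n:ℝ)-1) * (i:ℝ) = (c:ℝ) * (n:ℝ) := by
            have h := congrArg (fun z : ℤ => (z:ℝ)) h9
            push_cast at h
            linarith
          have hval : u + (n:ℝ) * ((u + l) - u) = (c:ℝ) / (n:ℝ) := by
            have h11 : u + (n:ℝ) * ((u + l) - u)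
                = ((a:ℝ) + ((n:ℝ)-1) * (i:ℝ)) / (n:ℝ)^2 := by
              rw [hu_def, hl_def]; push_cast; ring
            rw [h11, h9R, pow_two, mul_div_mul_right _ _ hνne]
          have hnice1 : NiceFn n (phi n u l) :=
            phi_nice hn hu0 hl0 hb1 (nadic_ratio _ 2) (nadic_ratio _ 2)
          have hnice2 : NiceFn n (psi n u l) :=
            psi_nice hn hu0 hl0 hb1 (nadic_ratio _ 2) (nadic_ratio _ 2)
          have humem : u = (((a - i) * n : ℤ):ℝ) / (n:ℝ)^3 := by
            rw [hu_def]; push_cast; field_simp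
          have hlmem : l = ((i * n : ℤ):ℝ) / (n:ℝ)^3 := by
            rw [hl_def]; push_cast; field_simp
          have hain2 : a - i ≤ (n:ℤ)^2 := by linarith
          have hiin2 : i ≤ (n:ℤ)^2 := by
            have h8 : i ≤ (n:ℤ) * i := le_mul_of_one_le_left (by omega) (by omega)
            linarith
          have hbound1 : (a - i) * (n:ℤ) ≤ (n:ℤ)^3 := by
            calc (a - i) * (n:ℤ) ≤ (n:ℤ)^2 * n := mul_le_mul_of_nonneg_right hain2 (by omega)
              _ = (n:ℤ)^3 := by ring
          have hbound2 : i * (n:ℤ) ≤ (n:ℤ)^3 := by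
            calc i * (n:ℤ) ≤ (n:ℤ)^2 * n := mul_le_mul_of_nonneg_right hiin2 (by omega)
              _ = (n:ℤ)^3 := by ring
          have hmember1 : phi n u l ∈ TSet n := by
            rw [humem, hlmem]
            exact phi_mem_TSet (by positivity) (by positivity) hbound1 hbound2
          have hmember2 : psi n u l ∈ TSet n := by
            rw [humem, hlmem]
            exact psi_mem_TSet (by positivity) (by positivity) hbound1 hbound2
          refine ⟨c, hc1, hc2, ⟨t, ht⟩, [phi n u l], [psi n u l], by simp, by simp,
            ?_, ?_, ?_, ?_⟩
          · intro g hg; simp only [List.mem_singleton] at hg; subst hg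
            exact ⟨hmember1, hnice1⟩
          · intro g hg; simp only [List.mem_singleton] at hg; subst hg
            exact ⟨hmember2, hnice2⟩
          · show compList [] (phi n u l ((a:ℝ) / (n:ℝ)^2)) = (c:ℝ)/(n:ℝ)
            rw [compList_nil, id_eq, hxul, phi_eval_mid (by linarith) (le_refl _), hval]
          · show compList [] (psi n u l ((c:ℝ) / (n:ℝ))) = (a:ℝ)/(n:ℝ)^2
            have hcnl : (c:ℝ)/(n:ℝ) = u + (n:ℝ) * l := by
              rw [← hval]; ring
            have hnl0 : 0 < (n:ℝ) * l := by positivity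
            rw [compList_nil, id_eq, hcnl,
              psi_eval_mid (by linarith) (le_refl _), hxul]
            field_simp
            ring
        · exact absurd ⟨c, by linarith [mul_comm c (n:ℤ)]⟩ hdvd_na
        · -- psi finisher
          have hdvd3 : ((n:ℤ) - 1) ∣ (a - c * n) := ⟨t - c, by linear_combination ht⟩
          obtain ⟨i, hi⟩ := hdvd3
          have hi1 : 1 ≤ i := by
            by_contra h
            have h2 : i ≤ 0 := by omega
            have h3 : ((n:ℤ) - 1) * i ≤ 0 := mul_nonpos_of_nonneg_of_nonpos (by omega) h2
            linarith
          have key : ((n:ℤ) - 1) * (c * n - i) = c * (n:ℤ)^2 - a := by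
            linear_combination hi
          have hu0' : 0 ≤ c * n - i := by
            have h4 : (n:ℤ)^2 ≤ c * (n:ℤ)^2 := le_mul_of_one_le_left (by positivity) hc1
            by_contra h
            have h2 : c * n - i ≤ -1 := by omega
            have h3 : ((n:ℤ) - 1) * (c * n - i) ≤ ((n:ℤ) - 1) * (-1) :=
              mul_le_mul_of_nonneg_left h2 (by omega)
            linarith
          have hci : c + i ≤ (n:ℤ) := by
            have key2 : ((n:ℤ) - 1) * (c + i) = a - c := by linear_combination -hi
            by_contra h
            have h4 : (n:ℤ) + 1 ≤ c + i := by omega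
            have h5 : ((n:ℤ)-1) * ((n:ℤ)+1) ≤ ((n:ℤ)-1)*(c+i) :=
              mul_le_mul_of_nonneg_left h4 (by omega)
            have h6 : ((n:ℤ)-1)*((n:ℤ)+1) = (n:ℤ)^2 - 1 := by ring
            linarith
          set u : ℝ := ((c * n - i : ℤ):ℝ) / (n:ℝ)^2 with hu_def
          set l : ℝ := ((i : ℤ):ℝ) / (n:ℝ)^2 with hl_def
          have hu0 : 0 ≤ u := by
            apply div_nonneg _ (by positivity)
            exact_mod_cast hu0'
          have hl0 : 0 < l := by
            apply div_pos _ (by positivity)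
            exact_mod_cast hi1
          have hsum : u + ((n:ℝ) + 1) * l = (((c + i) * n : ℤ):ℝ) / (n:ℝ)^2 := by
            rw [hu_def, hl_def]; push_cast; ring
          have hb1 : u + ((n:ℝ) + 1) * l ≤ 1 := by
            rw [hsum, div_le_one (by positivity), cast_pow_eq n 2]
            have h7 : (c + i) * (n:ℤ) ≤ (n:ℤ) * n := mul_le_mul_of_nonneg_right hci (by omega)
            have h8 : (n:ℤ) * n = (n:ℤ)^2 := by ring
            exact_mod_cast (by linarith : ((c + i) * (n:ℤ) : ℤ) ≤ (n:ℤ)^2)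
          have hiR : ((n:ℝ) - 1) * (i:ℝ) = (a:ℝ) - (c:ℝ) * (n:ℝ) := by
            have h := congrArg (fun z : ℤ => (z:ℝ)) hi
            push_cast at h
            linarith
          have h9 : c * n + ((n:ℤ)-1) * i = a := by linarith
          have h9R : (c:ℝ) * (n:ℝ) + ((n:ℝ)-1) * (i:ℝ) = (a:ℝ) := by
            have h := congrArg (fun z : ℤ => (z:ℝ)) h9
            push_cast at h
            linarith
          have hxul : (a:ℝ) / (n:ℝ)^2 = u + (n:ℝ) * l := by
            have h11 : u + (n:ℝ) * l
                = ((c:ℝ) * (n:ℝ) + ((n:ℝ)-1) * (i:ℝ)) / (n:ℝ)^2 := by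
              rw [hu_def, hl_def]; push_cast; ring
            rw [h11, h9R]
          have hcul : (c:ℝ) / (n:ℝ) = u + l := by
            have h11 : u + l = ((c:ℝ) * (n:ℝ)) / (n:ℝ)^2 := by
              rw [hu_def, hl_def]; push_cast; ring
            rw [h11, pow_two, mul_div_mul_right _ _ hνne]
          have hnice1 : NiceFn n (psi n u l) :=
            psi_nice hn hu0 hl0 hb1 (nadic_ratio _ 2) (nadic_ratio _ 2)
          have hnice2 : NiceFn n (phi n u l) :=
            phi_nice hn hu0 hl0 hb1 (nadic_ratio _ 2) (nadic_ratio _ 2)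
          have humem : u = (((c * n - i) * n : ℤ):ℝ) / (n:ℝ)^3 := by
            rw [hu_def]; push_cast; field_simp
          have hlmem : l = ((i * n : ℤ):ℝ) / (n:ℝ)^3 := by
            rw [hl_def]; push_cast; field_simp
          have hain2 : c * n - i ≤ (n:ℤ)^2 := by
            have h9 : c * n ≤ (n:ℤ) * n := mul_le_mul_of_nonneg_right (by omega) (by omega)
            have h10 : (n:ℤ) * n = (n:ℤ)^2 := by ring
            linarith
          have hiin2 : i ≤ (n:ℤ)^2 := by
            have h9 : (n:ℤ) ≤ (n:ℤ)^2 := by nlinarith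
            linarith [hci, hc1]
          have hbound1 : (c * n - i) * (n:ℤ) ≤ (n:ℤ)^3 := by
            calc (c * n - i) * (n:ℤ) ≤ (n:ℤ)^2 * n := mul_le_mul_of_nonneg_right hain2 (by omega)
              _ = (n:ℤ)^3 := by ring
          have hbound2 : i * (n:ℤ) ≤ (n:ℤ)^3 := by
            calc i * (n:ℤ) ≤ (n:ℤ)^2 * n := mul_le_mul_of_nonneg_right hiin2 (by omega)
              _ = (n:ℤ)^3 := by ring
          have hmember1 : psi n u l ∈ TSet n := by
            rw [humem, hlmem]
            exact psi_mem_TSet (by positivity) (by positivity) hbound1 hbound2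
          have hmember2 : phi n u l ∈ TSet n := by
            rw [humem, hlmem]
            exact phi_mem_TSet (by positivity) (by positivity) hbound1 hbound2
          refine ⟨c, hc1, hc2, ⟨t, ht⟩, [psi n u l], [phi n u l], by simp, by simp,
            ?_, ?_, ?_, ?_⟩
          · intro g hg; simp only [List.mem_singleton] at hg; subst hg
            exact ⟨hmember1, hnice1⟩
          · intro g hg; simp only [List.mem_singleton] at hg; subst hg
            exact ⟨hmember2, hnice2⟩
          · show compList [] (psi n u l ((a:ℝ) / (n:ℝ)^2)) = (c:ℝ)/(n:ℝ)
            have hnl0 : 0 < (n:ℝ) * l := by positivity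
            rw [compList_nil, id_eq, hxul,
              psi_eval_mid (by linarith) (le_refl _), hcul]
            field_simp
            ring
          · show compList [] (phi n u l ((c:ℝ) / (n:ℝ))) = (a:ℝ)/(n:ℝ)^2
            rw [compList_nil, id_eq, hcul,
              phi_eval_mid (by linarith) (le_refl _), hxul]
            ring
    | (p+3), ham, hx0, hx1, IH =>
        -- one exponent-reduction step
        set N : ℤ := (n:ℤ)^(p+1) with hN_def
        have hN0 : 0 < N := by positivity
        set j : ℤ := a / N with hj_def
        set r : ℤ := a % N with hr_def
        have hjr : N * j + r = a := Int.mul_ediv_add_emod a N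
        have hr0 : 0 ≤ r := Int.emod_nonneg a (by omega)
        have hrN : r < N := Int.emod_lt_of_pos a hN0
        have hrpos : 0 < r := by
          rcases lt_or_eq_of_le hr0 with h | h
          · exact h
          · exfalso
            apply hdvd_na
            have haj : a = N * j := by omega
            exact ⟨(n:ℤ)^p * j, by rw [haj, hN_def]; ring⟩
        have hj0 : 0 ≤ j := by
          rw [hj_def]
          exact Int.ediv_nonneg (by omega) (by omega)
        have hjlt : j < (n:ℤ)^2 := by
          have h1 : (n:ℤ)^(p+3) = N * (n:ℤ)^2 := by rw [hN_def]; ring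
          have h2 : N * j < N * (n:ℤ)^2 := by linarith
          exact lt_of_mul_lt_mul_left h2 (le_of_lt hN0)
        have hNj_lt : N * j < a := by linarith
        have ha_lt : a < N * (j + 1) := by
          have : N * (j + 1) = N * j + N := by ring
          linarith
        -- real facts
        have hpow3 : (n:ℝ)^(p+3) = (n:ℝ)^p * (n:ℝ)^3 := by rw [← pow_add]
        have hpow2 : (n:ℝ)^(p+2) = (n:ℝ)^p * (n:ℝ)^2 := by rw [← pow_add]
        have hPne : (n:ℝ)^p ≠ 0 := by positivity
        have hNR : ((N : ℤ):ℝ) = (n:ℝ)^(p+1) := by rw [hN_def]; push_cast; ring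
        have hgrid : ∀ z : ℤ, ((z:ℤ):ℝ) / (n:ℝ)^2 = ((z * N : ℤ):ℝ) / (n:ℝ)^(p+3) := by
          intro z
          push_cast
          rw [hNR]
          field_simp
          ring
        have hux : ((j:ℤ):ℝ) / (n:ℝ)^2 < (a:ℝ) / (n:ℝ)^(p+3) := by
          rw [hgrid j, div_lt_div_iff_of_pos_right (by positivity)]
          exact_mod_cast (by linarith : j * N < a)
        have hxu1 : (a:ℝ) / (n:ℝ)^(p+3) < (((j+1) : ℤ):ℝ) / (n:ℝ)^2 := by
          rw [hgrid (j+1), div_lt_div_iff_of_pos_right (by positivity)]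
          exact_mod_cast (by linarith : a < (j+1) * N)
        rcases le_or_gt j ((n:ℤ)^2 - n - 1) with hjcase | hjcase
        · -- φ step
          set u : ℝ := ((j:ℤ):ℝ) / (n:ℝ)^2 with hu_def
          set l : ℝ := (((1:ℤ)):ℝ) / (n:ℝ)^2 with hl_def
          have hu0 : 0 ≤ u := by
            apply div_nonneg _ (by positivity)
            exact_mod_cast hj0
          have hl0 : 0 < l := by
            apply div_pos _ (by positivity)
            norm_num
          have hsum : u + ((n:ℝ) + 1) * l = ((j + n + 1 : ℤ):ℝ) / (n:ℝ)^2 := by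
            rw [hu_def, hl_def]; push_cast; ring
          have hb1 : u + ((n:ℝ) + 1) * l ≤ 1 := by
            rw [hsum, div_le_one (by positivity), cast_pow_eq n 2]
            exact_mod_cast (by linarith : j + (n:ℤ) + 1 ≤ (n:ℤ)^2)
          have hul : u + l = (((j+1) : ℤ):ℝ) / (n:ℝ)^2 := by
            rw [hu_def, hl_def]; push_cast; ring
          set a' : ℤ := a - ((n:ℤ) - 1) * j * (n:ℤ)^p with ha'_def
          have hx' : u + (n:ℝ) * ((a:ℝ)/(n:ℝ)^(p+3) - u) = (a':ℝ) / (n:ℝ)^(p+2) := by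
            rw [hu_def, ha'_def, hpow3, hpow2]
            push_cast
            field_simp
            ring
          have hx'0 : 0 < (a':ℝ) / (n:ℝ)^(p+2) := by
            rw [← hx']
            have h1 : 0 < (n:ℝ) * ((a:ℝ)/(n:ℝ)^(p+3) - u) := mul_pos hν0 (by linarith)
            linarith
          have hx'1 : (a':ℝ) / (n:ℝ)^(p+2) < 1 := by
            rw [← hx']
            have h1 : (n:ℝ) * ((a:ℝ)/(n:ℝ)^(p+3) - u) < (n:ℝ) * l := by
              apply mul_lt_mul_of_pos_left _ hν0
              have := hxu1
              rw [← hul] at this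
              linarith
            have h2 : u + (n:ℝ) * l = ((j + n : ℤ):ℝ) / (n:ℝ)^2 := by
              rw [hu_def, hl_def]; push_cast; ring
            have h3 : ((j + n : ℤ):ℝ) / (n:ℝ)^2 ≤ 1 := by
              rw [div_le_one (by positivity), cast_pow_eq n 2]
              exact_mod_cast (by linarith : j + (n:ℤ) ≤ (n:ℤ)^2)
            linarith
          obtain ⟨c, hc1, hc2, hc3, gs', hs', hg1, hg2, hg3, hg4, hg5, hg6⟩ :=
            IH (p+2) (by omega) a' hx'0 hx'1
          have hnice1 : NiceFn n (phi n u l) :=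
            phi_nice hn hu0 hl0 hb1 (nadic_ratio _ 2) (nadic_ratio _ 2)
          have hnice2 : NiceFn n (psi n u l) :=
            psi_nice hn hu0 hl0 hb1 (nadic_ratio _ 2) (nadic_ratio _ 2)
          have humem : u = ((j * n : ℤ):ℝ) / (n:ℝ)^3 := by
            rw [hu_def]; push_cast; field_simp
          have hlmem : l = (((n:ℤ) : ℤ):ℝ) / (n:ℝ)^3 := by
            rw [hl_def]; push_cast; field_simp
          have hbound1 : j * (n:ℤ) ≤ (n:ℤ)^3 := by
            calc j * (n:ℤ) ≤ (n:ℤ)^2 * n :=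
                  mul_le_mul_of_nonneg_right (by linarith) (by omega)
              _ = (n:ℤ)^3 := by ring
          have hbound2 : (n:ℤ) ≤ (n:ℤ)^3 := by nlinarith
          have hmember1 : phi n u l ∈ TSet n := by
            rw [humem, hlmem]
            exact phi_mem_TSet (by positivity) (by omega) hbound1 hbound2
          have hmember2 : psi n u l ∈ TSet n := by
            rw [humem, hlmem]
            exact psi_mem_TSet (by positivity) (by omega) hbound1 hbound2
          refine ⟨c, hc1, hc2, ?_, phi n u l :: gs', hs' ++ [psi n u l], ?_, ?_, ?_, ?_, ?_, ?_⟩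
          · have heq : a - c = ((n:ℤ) - 1) * (j * (n:ℤ)^p) + (a' - c) := by
              rw [ha'_def]; ring
            rw [heq]
            exact dvd_add ⟨j * (n:ℤ)^p, rfl⟩ hc3
          · simp only [List.length_cons]; omega
          · rw [List.length_append, List.length_singleton]; omega
          · intro g hg
            rcases List.mem_cons.mp hg with rfl | hg'
            · exact ⟨hmember1, hnice1⟩
            · exact hg3 g hg'
          · intro g hg
            rcases List.mem_append.mp hg with hg' | hg'
            · exact hg4 g hg'
            · simp only [List.mem_singleton] at hg'; subst hg'
              exact ⟨hmember2, hnice2⟩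
          · rw [compList_cons]
            simp only [Function.comp_apply]
            rw [phi_eval_mid hux (by rw [hul]; exact le_of_lt hxu1), hx']
            exact hg5
          · rw [compList_append]
            simp only [Function.comp_apply]
            rw [hg6, compList_cons, compList_nil]
            simp only [Function.comp_apply, id_eq]
            rw [← hx']
            have hlt1 : u < u + (n:ℝ) * ((a:ℝ)/(n:ℝ)^(p+3) - u) := by
              have h1 : 0 < (n:ℝ) * ((a:ℝ)/(n:ℝ)^(p+3) - u) := mul_pos hν0 (by linarith)
              linarith
            have hlt2 : u + (n:ℝ) * ((a:ℝ)/(n:ℝ)^(p+3) - u) ≤ u + (n:ℝ) * l := by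
              have h1 : (n:ℝ) * ((a:ℝ)/(n:ℝ)^(p+3) - u) ≤ (n:ℝ) * l := by
                apply mul_le_mul_of_nonneg_left _ (le_of_lt hν0)
                have := hxu1
                rw [← hul] at this
                linarith
              linarith
            rw [psi_eval_mid hlt1 hlt2, hpow3]
            field_simp
            ring
        · -- ψ step
          have h2n : 2*(n:ℤ) ≤ (n:ℤ)^2 := by nlinarith
          have hjn : (n:ℤ) ≤ j := by linarith
          set u : ℝ := ((j - n : ℤ):ℝ) / (n:ℝ)^2 with hu_def
          set l : ℝ := (((1:ℤ)):ℝ) / (n:ℝ)^2 with hl_def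
          have hu0 : 0 ≤ u := by
            apply div_nonneg _ (by positivity)
            exact_mod_cast (by omega : (0:ℤ) ≤ j - n)
          have hl0 : 0 < l := by
            apply div_pos _ (by positivity)
            norm_num
          have hsum : u + ((n:ℝ) + 1) * l = ((j + 1 : ℤ):ℝ) / (n:ℝ)^2 := by
            rw [hu_def, hl_def]; push_cast; ring
          have hb1 : u + ((n:ℝ) + 1) * l ≤ 1 := by
            rw [hsum, div_le_one (by positivity), cast_pow_eq n 2]
            exact_mod_cast (by linarith : j + 1 ≤ (n:ℤ)^2)
          have hunl : u + (n:ℝ) * l = ((j : ℤ):ℝ) / (n:ℝ)^2 := by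
            rw [hu_def, hl_def]; push_cast; ring
          set a' : ℤ := a - ((n:ℤ) - 1) * (j + 1) * (n:ℤ)^p with ha'_def
          have hx' : u + l + (n:ℝ) * ((a:ℝ)/(n:ℝ)^(p+3) - u - (n:ℝ) * l)
              = (a':ℝ) / (n:ℝ)^(p+2) := by
            rw [hu_def, hl_def, ha'_def, hpow3, hpow2]
            push_cast
            field_simp
            ring
          have hxin1 : u + (n:ℝ) * l < (a:ℝ)/(n:ℝ)^(p+3) := by rw [hunl]; exact hux
          have hxin2 : (a:ℝ)/(n:ℝ)^(p+3) ≤ u + ((n:ℝ) + 1) * l := by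
            rw [hsum]; exact le_of_lt hxu1
          have hx'0 : 0 < (a':ℝ) / (n:ℝ)^(p+2) := by
            rw [← hx']
            have h1 : 0 < (n:ℝ) * ((a:ℝ)/(n:ℝ)^(p+3) - u - (n:ℝ) * l) :=
              mul_pos hν0 (by linarith)
            have h2 : 0 ≤ l := le_of_lt hl0
            linarith
          have hx'1 : (a':ℝ) / (n:ℝ)^(p+2) < 1 := by
            rw [← hx']
            have h1 : (n:ℝ) * ((a:ℝ)/(n:ℝ)^(p+3) - u - (n:ℝ) * l) < (n:ℝ) * l := by
              apply mul_lt_mul_of_pos_left _ hν0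
              linarith [hxu1, hsum, hxin2, (by rw [hsum] : u + ((n:ℝ)+1)*l = ((j + 1 : ℤ):ℝ) / (n:ℝ)^2)]
            have h2 : u + l + (n:ℝ) * ((a:ℝ)/(n:ℝ)^(p+3) - u - (n:ℝ) * l) < u + ((n:ℝ)+1) * l := by
              linarith
            linarith [hb1]
          obtain ⟨c, hc1, hc2, hc3, gs', hs', hg1, hg2, hg3, hg4, hg5, hg6⟩ :=
            IH (p+2) (by omega) a' hx'0 hx'1
          have hnice1 : NiceFn n (psi n u l) :=
            psi_nice hn hu0 hl0 hb1 (nadic_ratio _ 2) (nadic_ratio _ 2)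
          have hnice2 : NiceFn n (phi n u l) :=
            phi_nice hn hu0 hl0 hb1 (nadic_ratio _ 2) (nadic_ratio _ 2)
          have humem : u = (((j - n) * n : ℤ):ℝ) / (n:ℝ)^3 := by
            rw [hu_def]; push_cast; field_simp
          have hlmem : l = (((n:ℤ) : ℤ):ℝ) / (n:ℝ)^3 := by
            rw [hl_def]; push_cast; field_simp
          have hbound1 : (j - n) * (n:ℤ) ≤ (n:ℤ)^3 := by
            calc (j - n) * (n:ℤ) ≤ (n:ℤ)^2 * n :=
                  mul_le_mul_of_nonneg_right (by linarith) (by omega)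
              _ = (n:ℤ)^3 := by ring
          have hbound2 : (n:ℤ) ≤ (n:ℤ)^3 := by nlinarith
          have hu_nonneg : (0:ℤ) ≤ (j - n) * n := mul_nonneg (by omega) (by omega)
          have hmember1 : psi n u l ∈ TSet n := by
            rw [humem, hlmem]
            exact psi_mem_TSet hu_nonneg (by omega) hbound1 hbound2
          have hmember2 : phi n u l ∈ TSet n := by
            rw [humem, hlmem]
            exact phi_mem_TSet hu_nonneg (by omega) hbound1 hbound2
          refine ⟨c, hc1, hc2, ?_, psi n u l :: gs', hs' ++ [phi n u l], ?_, ?_, ?_, ?_, ?_, ?_⟩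
          · have heq : a - c = ((n:ℤ) - 1) * ((j + 1) * (n:ℤ)^p) + (a' - c) := by
              rw [ha'_def]; ring
            rw [heq]
            exact dvd_add ⟨(j + 1) * (n:ℤ)^p, rfl⟩ hc3
          · simp only [List.length_cons]; omega
          · rw [List.length_append, List.length_singleton]; omega
          · intro g hg
            rcases List.mem_cons.mp hg with rfl | hg'
            · exact ⟨hmember1, hnice1⟩
            · exact hg3 g hg'
          · intro g hg
            rcases List.mem_append.mp hg with hg' | hg'
            · exact hg4 g hg'
            · simp only [List.mem_singleton] at hg'; subst hg'
              exact ⟨hmember2, hnice2⟩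
          · rw [compList_cons]
            simp only [Function.comp_apply]
            rw [psi_eval_high hxin1 hxin2, hx']
            exact hg5
          · rw [compList_append]
            simp only [Function.comp_apply]
            rw [hg6, compList_cons, compList_nil]
            simp only [Function.comp_apply, id_eq]
            rw [← hx']
            have hppos : 0 < (n:ℝ) * ((a:ℝ)/(n:ℝ)^(p+3) - u - (n:ℝ) * l) :=
              mul_pos hν0 (by linarith)
            have hlt1 : u + l < u + l + (n:ℝ) * ((a:ℝ)/(n:ℝ)^(p+3) - u - (n:ℝ) * l) := by
              linarith
            have hlt2 : u + l + (n:ℝ) * ((a:ℝ)/(n:ℝ)^(p+3) - u - (n:ℝ) * l)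
                ≤ u + ((n:ℝ) + 1) * l := by
              have h1 : (n:ℝ) * ((a:ℝ)/(n:ℝ)^(p+3) - u - (n:ℝ) * l) ≤ (n:ℝ) * l := by
                apply mul_le_mul_of_nonneg_left _ (le_of_lt hν0)
                linarith [hxin2]
              linarith
            rw [phi_eval_high hlt1 hlt2, hpow3]
            field_simp
            ring

end FnAux

/-- fix `n ≥ 2` and a finite generating set `S` of `F_n`. There is
`C > 0` (depending only on `n` and `S`) such that whenever `x = a/n^k` and
`y = b/n^ℓ` are `n`-adic rationals in `(0,1)` with `a ≡ b (mod n-1)`, some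
`f ∈ F_n` with `f x = y` has word length at most `C(k + ℓ)`. -/
theorem Fn_orbit_with_length_bound (n : ℕ) (hn : 2 ≤ n) (S : Finset (ℝ → ℝ))
    (hS : ∀ g ∈ S, IsThompsonFn n g)
    (hgen : ∀ f : ℝ → ℝ, IsThompsonFn n f → ∃ w : List (ℝ → ℝ), WordIn S w ∧ wprod w = f) :
    ∃ C : ℝ, 0 < C ∧
      ∀ a k b l : ℕ,
        0 < (a : ℝ) / n ^ k → (a : ℝ) / n ^ k < 1 →
        0 < (b : ℝ) / n ^ l → (b : ℝ) / n ^ l < 1 →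
        (a : ℤ) ≡ (b : ℤ) [ZMOD ((n : ℤ) - 1)] →
        ∃ (f : ℝ → ℝ) (w : List (ℝ → ℝ)),
          IsThompsonFn n f ∧ f ((a : ℝ) / n ^ k) = (b : ℝ) / n ^ l ∧
          WordIn S w ∧ wprod w = f ∧ (w.length : ℝ) ≤ C * (k + l) := by
  classical
  have hν0 : (0:ℝ) < (n:ℝ) := by
    have : (0:ℕ) < n := by omega
    exact_mod_cast this
  have hνne : (n:ℝ) ≠ 0 := ne_of_gt hν0
  set wOf : (ℝ → ℝ) → List (ℝ → ℝ) :=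
    fun g => if h : IsThompsonFn n g then (hgen g h).choose else [] with hwOf
  have hwOf1 : ∀ g : ℝ → ℝ, IsThompsonFn n g → WordIn S (wOf g) ∧ wprod (wOf g) = g := by
    intro g hg
    rw [hwOf]
    simp only [dif_pos hg]
    exact (hgen g hg).choose_spec
  set W : ℕ := (FnAux.TSet n).sup fun g => (wOf g).length with hW
  have hWle : ∀ g ∈ FnAux.TSet n, (wOf g).length ≤ W := by
    intro g hg
    rw [hW]
    exact Finset.le_sup (f := fun g => (wOf g).length) hg
  refine ⟨(W:ℝ) + 1, by positivity, ?_⟩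
  intro a k b l hx0 hx1 hy0 hy1 hmod
  have hcast : ∀ (a : ℕ) (m : ℕ),
      (((a:ℤ)):ℝ) / (n:ℝ)^m = (a:ℝ) / (n:ℝ)^m := by
    intro a m
    push_cast
    ring
  obtain ⟨c₁, hc11, hc12, hc13, gs₁, hs₁, hlen1, hlen1', hmem1, hmem1', heq1, heq1'⟩ :=
    FnAux.reduce hn k (a:ℤ) (by rw [hcast]; exact hx0) (by rw [hcast]; exact hx1)
  obtain ⟨c₂, hc21, hc22, hc23, gs₂, hs₂, hlen2, hlen2', hmem2, hmem2', heq2, heq2'⟩ :=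
    FnAux.reduce hn l (b:ℤ) (by rw [hcast]; exact hy0) (by rw [hcast]; exact hy1)
  have hdab : ((n:ℤ) - 1) ∣ ((b:ℤ) - (a:ℤ)) := Int.ModEq.dvd hmod
  have hdcc : ((n:ℤ) - 1) ∣ (c₂ - c₁) := by
    have heqd : c₂ - c₁ = (((a:ℤ) - c₁) + ((b:ℤ) - (a:ℤ))) - ((b:ℤ) - c₂) := by ring
    rw [heqd]
    exact dvd_sub (dvd_add hc13 hdab) hc23
  have hnZ : (2:ℤ) ≤ (n:ℤ) := by exact_mod_cast hn
  have hcc : c₂ - c₁ = 0 := by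
    refine Int.eq_zero_of_abs_lt_dvd hdcc ?_
    rw [abs_lt]
    omega
  have hc12' : c₂ = c₁ := by omega
  set G : List (ℝ → ℝ) := gs₁ ++ hs₂ with hG
  have hmemG : ∀ g ∈ G, g ∈ FnAux.TSet n ∧ FnAux.NiceFn n g := by
    intro g hg
    rcases List.mem_append.mp hg with h | h
    · exact hmem1 g h
    · exact hmem2' g h
  have hniceG : FnAux.NiceFn n (FnAux.compList G) :=
    FnAux.nice_compList hνne fun g hg => (hmemG g hg).2
  have hfx : FnAux.compList G ((a:ℝ) / (n:ℝ)^k) = (b:ℝ) / (n:ℝ)^l := by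
    rw [hG, FnAux.compList_append, Function.comp_apply, ← hcast a k, heq1, ← hc12',
      heq2', hcast]
  refine ⟨FnAux.compList G, FnAux.bigWord wOf G, hniceG.1, hfx, ?_, ?_, ?_⟩
  · exact FnAux.wordIn_bigWord fun g hg => (hwOf1 g (hmemG g hg).2.1).1
  · exact FnAux.wprod_bigWord fun g hg => (hwOf1 g (hmemG g hg).2.1).2
  · have h1 : (FnAux.bigWord wOf G).length ≤ G.length * W :=
      FnAux.bigWord_length fun g hg => hWle g (hmemG g hg).1
    have h2 : G.length ≤ k + l := by
      rw [hG, List.length_append]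
      omega
    have h3 : (FnAux.bigWord wOf G).length ≤ (k + l) * (W + 1) := by
      calc (FnAux.bigWord wOf G).length ≤ G.length * W := h1
        _ ≤ (k + l) * W := Nat.mul_le_mul_right _ h2
        _ ≤ (k + l) * (W + 1) := Nat.mul_le_mul_left _ (by omega)
    have h4 : ((FnAux.bigWord wOf G).length : ℝ) ≤ (((k + l) * (W + 1) : ℕ) : ℝ) := by
      exact_mod_cast h3
    have h5 : (((k + l) * (W + 1) : ℕ) : ℝ) = ((W:ℝ) + 1) * ((k:ℝ) + (l:ℝ)) := by
      push_cast
      ring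
    rw [h5] at h4
    exact h4
end
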